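/- arXiv:1306.4236 — 5 statements merged into one kernel-verified Lean document; each statement's English description precedes it below -/
import Mathlib

section
/- For every integer k ≥ 1 and every integer s ≥ 1, any k-uniform [1,s]-almost intersecting multihypergraph has at most s·(2k choose k) edges (counted with multiplicity). -/
/-!
Katona's permutation method. Fix a linear order `σ` of the ground set and call an edge *good*
if some edge lies entirely after it. Let `B₀` be an edge whose first element comes as late as
possible: an edge preceding some other edge ends before that edge starts, hence before `B₀`
starts, so every good edge is disjoint from `B₀` and at most `s` edges are good for `σ`.
Conversely, every edge `A` has a disjoint partner `B`; each order puts some `k`-subset of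
`A ∪ B` first, and all of them are equally likely by symmetry, so `A` precedes `B` in at
least a `1 / (2k choose k)` fraction of the orders. Counting pairs (order, good edge) in both
ways gives `|F| ≤ s * (2k choose k)`.
-/

open Finset

section

variable {V β : Type*}

def Precedes [LT β] (f : V → β) (A B : Finset V) : Prop :=
  ∀ a ∈ A, ∀ b ∈ B, f a < f b

instance [LinearOrder β] (f : V → β) (A B : Finset V) : Decidable (Precedes f A B) :=
  inferInstanceAs (Decidable (∀ a ∈ A, ∀ b ∈ B, f a < f b))

theorem exists_subset_card_eq_precedes_sdiff [DecidableEq V] [LinearOrder β] {f : V → β}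
    (hf : Function.Injective f) (U : Finset V) {m : ℕ} (hm : m ≤ #U) :
    ∃ T ⊆ U, #T = m ∧ Precedes f T (U \ T) := by
  induction U using Finset.induction_on_max_value f generalizing m with
  | empty =>
    exact ⟨∅, empty_subset _, by rw [card_empty] at hm ⊢; omega, by simp [Precedes]⟩
  | insert x U hxU hmax ih =>
    rw [card_insert_of_notMem hxU] at hm
    rcases Nat.lt_or_ge m (#U + 1) with hlt | hge
    · obtain ⟨T, hTU, hT, hprec⟩ := ih (Nat.lt_succ_iff.mp hlt)
      refine ⟨T, hTU.trans (subset_insert _ _), hT, fun t ht u hu => ?_⟩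
      obtain rfl | huU := mem_insert.mp (mem_sdiff.mp hu).1
      · exact (hmax t (hTU ht)).lt_of_ne (hf.ne fun h => hxU (h ▸ hTU ht))
      · exact hprec t ht u (mem_sdiff.mpr ⟨huU, (mem_sdiff.mp hu).2⟩)
    · refine ⟨insert x U, Subset.rfl, by rw [card_insert_of_notMem hxU]; omega, ?_⟩
      simp [Precedes]

theorem exists_perm_mapsTo_of_card_eq [Finite V] {A B A' B' : Finset V} (hAB : Disjoint A B)
    (hAB' : Disjoint A' B') (hA : #A = #A') (hB : #B = #B') :
    ∃ g : Equiv.Perm V, (∀ a ∈ A, g a ∈ A') ∧ ∀ b ∈ B, g b ∈ B' := by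
  let eA := equivOfCardEq hA
  let eB := equivOfCardEq hB
  obtain ⟨g, hg⟩ := Equiv.Perm.exists_extending_pair
    (Sum.elim ((↑) : A → V) ((↑) : B → V))
    (Sum.elim (fun a => (eA a : V)) fun b => (eB b : V))
    (Subtype.val_injective.sumElim Subtype.val_injective fun a b h =>
      disjoint_left.mp hAB a.2 (h ▸ b.2))
    ((Subtype.val_injective.comp eA.injective).sumElim (Subtype.val_injective.comp eB.injective)
      fun a b h => disjoint_left.mp hAB' (eA a).2 ((congrArg (· ∈ B') h).mpr (eB b).2))
  exact ⟨g, fun a ha => (hg (.inl ⟨a, ha⟩)).symm ▸ (eA _).2,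
    fun b hb => (hg (.inr ⟨b, hb⟩)).symm ▸ (eB _).2⟩

section Orders

variable {ι : Type*} [Fintype V] [DecidableEq V] [Fintype ι] [DecidableEq ι] [LinearOrder ι]

theorem card_filter_precedes_le_of_card_eq {A B A' B' : Finset V} (hAB : Disjoint A B)
    (hAB' : Disjoint A' B') (hA : #A = #A') (hB : #B = #B') :
    #{σ : V ≃ ι | Precedes σ A' B'} ≤ #{σ : V ≃ ι | Precedes σ A B} := by
  obtain ⟨g, hgA, hgB⟩ := exists_perm_mapsTo_of_card_eq hAB hAB' hA hB
  refine card_le_card_of_injOn (fun σ => g.trans σ) (fun σ hσ => ?_)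
    (fun σ _ τ _ h => Equiv.ext fun x => by simpa using DFunLike.congr_fun h (g.symm x))
  simp only [coe_filter, mem_univ, true_and, Set.mem_ofPred_eq] at hσ ⊢
  exact fun a ha b hb => hσ _ (hgA a ha) _ (hgB b hb)

theorem card_univ_le_choose_mul_card_filter_precedes {A B : Finset V} (hAB : Disjoint A B) :
    #(univ : Finset (V ≃ ι)) ≤ (#A + #B).choose #A * #{σ : V ≃ ι | Precedes σ A B} := by
  set U := A ∪ B
  have hU : #U = #A + #B := card_union_of_disjoint hAB
  calc #(univ : Finset (V ≃ ι))
      ≤ #((powersetCard #A U).biUnion fun T => {σ : V ≃ ι | Precedes σ T (U \ T)}) := by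
        refine card_le_card fun σ _ => ?_
        obtain ⟨T, hTU, hT, hσ⟩ :=
          exists_subset_card_eq_precedes_sdiff σ.injective U (hU ▸ le_self_add)
        exact mem_biUnion.mpr ⟨T, mem_powersetCard.mpr ⟨hTU, hT⟩, by simpa using hσ⟩
    _ ≤ ∑ T ∈ powersetCard #A U, #{σ : V ≃ ι | Precedes σ T (U \ T)} := card_biUnion_le
    _ ≤ ∑ _T ∈ powersetCard #A U, #{σ : V ≃ ι | Precedes σ A B} := by
        refine sum_le_sum fun T hT => ?_
        obtain ⟨hTU, hT⟩ := mem_powersetCard.mp hT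
        refine card_filter_precedes_le_of_card_eq hAB disjoint_sdiff hT.symm ?_
        rw [card_sdiff_of_subset hTU]
        omega
    _ = (#A + #B).choose #A * #{σ : V ≃ ι | Precedes σ A B} := by
        rw [sum_const, card_powersetCard, hU, smul_eq_mul]

end Orders

def HasFollower [LT β] (f : V → β) (F : Multiset (Finset V)) (A : Finset V) : Prop :=
  ∃ B ∈ F, Precedes f A B

instance [LinearOrder β] (f : V → β) (F : Multiset (Finset V)) :
    DecidablePred (HasFollower f F) :=
  fun _ => Multiset.decidableExistsMultiset

theorem card_filter_hasFollower_le [DecidableEq V] [LinearOrder β] (f : V → β)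
    (F : Multiset (Finset V)) {s : ℕ}
    (hF : ∀ A ∈ F, Multiset.card (F.filter fun B => Disjoint A B) ≤ s) :
    Multiset.card (F.filter (HasFollower f F)) ≤ s := by
  rcases eq_or_ne F 0 with rfl | hF₀
  · simp
  -- `B₀` is an edge whose first element comes as late as possible
  obtain ⟨B₀, hB₀, hB₀max⟩ :=
    Multiset.exists_max_image (fun B : Finset V => B.inf fun b => (f b : WithTop β)) hF₀
  refine (Multiset.card_le_card (Multiset.monotone_filter_right F ?_)).trans (hF B₀ hB₀)
  rintro A ⟨B, hB, hAB⟩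
  refine disjoint_left.mpr fun a haB₀ haA => ?_
  have hlt : (f a : WithTop β) < B.inf fun b => (f b : WithTop β) :=
    (Finset.lt_inf_iff (WithTop.coe_lt_top _)).mpr fun b hb =>
      WithTop.coe_lt_coe.mpr (hAB a haA b hb)
  exact (hlt.trans_le (hB₀max B hB)).not_ge (inf_le haB₀)

theorem Multiset.sum_card_filter_eq_sum_map_card_filter {Ω α : Type*} [Fintype Ω]
    (M : Multiset α) (p : Ω → α → Prop) [∀ ω a, Decidable (p ω a)] :
    ∑ ω, card (M.filter (p ω)) = (M.map fun a => #{ω | p ω a}).sum := by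
  induction M using Multiset.induction_on with
  | empty => simp
  | cons a M ih =>
    simp only [Multiset.filter_cons, Multiset.card_add, Multiset.map_cons, Multiset.sum_cons,
      sum_add_distrib, ih, apply_ite Multiset.card, Multiset.card_singleton,
      Multiset.card_zero, card_filter]

theorem card_le_mul_choose_of_fintype [Fintype V] [DecidableEq V] {k s : ℕ}
    (F : Multiset (Finset V)) (huniform : ∀ A ∈ F, #A = k)
    (hpartner : ∀ A ∈ F, ∃ B ∈ F, Disjoint A B)
    (hdisj : ∀ A ∈ F, Multiset.card (F.filter fun B => Disjoint A B) ≤ s) :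
    Multiset.card F ≤ s * (2 * k).choose k := by
  set n := Fintype.card V
  set N := #(univ : Finset (V ≃ Fin n))
  have hN : 0 < N := card_pos.mpr ⟨Fintype.equivFin V, mem_univ _⟩
  have hlower : ∀ A ∈ F, N ≤ (2 * k).choose k * #{σ : V ≃ Fin n | HasFollower σ F A} := by
    intro A hA
    obtain ⟨B, hB, hAB⟩ := hpartner A hA
    have h := card_univ_le_choose_mul_card_filter_precedes (ι := Fin n) hAB
    rw [huniform A hA, huniform B hB, ← two_mul] at h
    exact h.trans (Nat.mul_le_mul_left _ (card_le_card (monotone_filter_right _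
      fun σ _ hσ => ⟨B, hB, hσ⟩)))
  refine Nat.le_of_mul_le_mul_right ?_ hN
  calc Multiset.card F * N = (F.map fun _ => N).sum := by simp [mul_comm]
    _ ≤ (F.map fun A => (2 * k).choose k * #{σ : V ≃ Fin n | HasFollower σ F A}).sum :=
        Multiset.sum_map_le_sum_map _ _ hlower
    _ = (2 * k).choose k * ∑ σ : V ≃ Fin n, Multiset.card (F.filter (HasFollower σ F)) := by
        rw [Multiset.sum_map_mul_left, Multiset.sum_card_filter_eq_sum_map_card_filter]
    _ ≤ (2 * k).choose k * ∑ _σ : V ≃ Fin n, s :=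
        Nat.mul_le_mul_left _ (sum_le_sum fun σ _ => card_filter_hasFollower_le σ F hdisj)
    _ = s * (2 * k).choose k * N := by rw [sum_const, smul_eq_mul]; ring

theorem card_le_mul_choose [DecidableEq V] {k s : ℕ}
    (F : Multiset (Finset V)) (huniform : ∀ A ∈ F, #A = k)
    (hpartner : ∀ A ∈ F, ∃ B ∈ F, Disjoint A B)
    (hdisj : ∀ A ∈ F, Multiset.card (F.filter fun B => Disjoint A B) ≤ s) :
    Multiset.card F ≤ s * (2 * k).choose k := by
  set φ : Finset V → Finset F.sup := Finset.subtype (· ∈ F.sup)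
  have hφ : ∀ A ∈ F, (φ A).map (Function.Embedding.subtype _) = A := fun A hA =>
    subtype_map_of_mem fun _ ha => Multiset.le_sup hA ha
  have hφdisj : ∀ A ∈ F, ∀ B ∈ F, Disjoint (φ A) (φ B) ↔ Disjoint A B :=
    fun A hA B hB => by rw [← disjoint_map (Function.Embedding.subtype _), hφ A hA, hφ B hB]
  have hfilter : ∀ A ∈ F, (F.map φ).filter (fun B => Disjoint (φ A) B)
      = (F.filter fun B => Disjoint A B).map φ := fun A hA => by
    rw [Multiset.filter_map]
    exact congrArg _ (Multiset.filter_congr fun B hB => hφdisj A hA B hB)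
  rw [← Multiset.card_map φ F]
  refine card_le_mul_choose_of_fintype (F.map φ) ?_ ?_ ?_ <;>
    simp only [Multiset.forall_mem_map_iff]
  · exact fun A hA => by rw [← card_map, hφ A hA, huniform A hA]
  · intro A hA
    obtain ⟨B, hB, hAB⟩ := hpartner A hA
    exact ⟨φ B, Multiset.mem_map_of_mem φ hB, (hφdisj A hA B hB).mpr hAB⟩
  · exact fun A hA => by rw [hfilter A hA, Multiset.card_map]; exact hdisj A hA

end

theorem stmt_0_general {α : Type*} [DecidableEq α] (k s : ℕ)
    (F : Multiset (Finset α))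
    (huniform : ∀ A ∈ F, A.card = k)
    (hai : ∀ A ∈ F,
      1 ≤ Multiset.card (F.filter fun B => Disjoint A B) ∧
      Multiset.card (F.filter fun B => Disjoint A B) ≤ s) :
    Multiset.card F ≤ s * Nat.choose (2 * k) k := by
  refine card_le_mul_choose F huniform (fun A hA => ?_) fun A hA => (hai A hA).2
  obtain ⟨B, hB⟩ := Multiset.card_pos_iff_exists_mem.mp (hai A hA).1
  exact ⟨B, (Multiset.mem_filter.mp hB).1, (Multiset.mem_filter.mp hB).2⟩

/-- For every integer `k ≥ 1` and `s ≥ 1`, any `k`-uniform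
`[1,s]`-almost intersecting multihypergraph has at most `s * (2k choose k)` edges
(counted with multiplicity). -/
theorem stmt_0 {α : Type*} [DecidableEq α] (k s : ℕ) (hk : 1 ≤ k) (hs : 1 ≤ s)
    (F : Multiset (Finset α))
    (huniform : ∀ A ∈ F, A.card = k)
    (hai : ∀ A ∈ F,
      1 ≤ Multiset.card (F.filter fun B => Disjoint A B) ∧
      Multiset.card (F.filter fun B => Disjoint A B) ≤ s) :
    Multiset.card F ≤ s * Nat.choose (2 * k) k :=
  stmt_0_general k s F huniform hai
end

section
/- For every integer k ≥ 1 and every integer s ≥ 1, if a k-uniform [1,s]-almost intersecting multihypergraph F has exactly s·(2k choose k) edges (counted with multiplicity), then there exists a set S with |S| = 2k such that F is the multiset consisting of every k-element subset of S, each occurring with multiplicity exactly s. -/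
open Finset

section OrderTools

variable {β : Type*} [Fintype β] [DecidableEq β]

/-- There is an order (equiv to `Fin n`) compatible with any given weight function. -/
theorem exists_mono_equiv (w : β → ℕ) :
    ∃ π : β ≃ Fin (Fintype.card β), ∀ a b, w a < w b → π a < π b := by
  classical
  set n := Fintype.card β with hn
  obtain e := Fintype.equivFin β
  set key : β → ℕ := fun a => w a * (n + 1) + (e a : ℕ) with hkey
  have hkeylt : ∀ a b, w a < w b → key a < key b := by
    intro a b h
    have ha : (e a : ℕ) < n + 1 := lt_of_lt_of_le (e a).isLt (by omega)
    have : (w a + 1) * (n + 1) ≤ w b * (n + 1) := Nat.mul_le_mul_right _ h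
    simp only [hkey]
    nlinarith
  have hinj : Function.Injective key := by
    intro a b hab
    have hw : w a = w b := by
      rcases lt_trichotomy (w a) (w b) with h | h | h
      · exact absurd hab (Nat.ne_of_lt (hkeylt _ _ h))
      · exact h
      · exact absurd hab.symm (Nat.ne_of_lt (hkeylt _ _ h))
    have h1 : (e a : ℕ) = (e b : ℕ) := by
      simp only [hkey, hw] at hab; omega
    exact e.injective (Fin.val_injective h1)
  set V : Finset ℕ := Finset.univ.image key with hV
  have hVcard : V.card = n := by
    rw [hV, Finset.card_image_of_injective _ hinj, Finset.card_univ]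
  have hmem : ∀ a, key a ∈ V := fun a => Finset.mem_image_of_mem _ (Finset.mem_univ a)
  set iso := V.orderIsoOfFin hVcard with hiso
  set g : β → Fin n := fun a => iso.symm ⟨key a, hmem a⟩ with hg
  have hginj : Function.Injective g := by
    intro a b hab
    have := iso.symm.injective hab
    exact hinj (congrArg Subtype.val this)
  have hgbij : Function.Bijective g := (Fintype.bijective_iff_injective_and_card g).2 ⟨hginj, by simp [hn]⟩
  refine ⟨Equiv.ofBijective g hgbij, ?_⟩
  intro a b h
  have : (⟨key a, hmem a⟩ : V) < ⟨key b, hmem b⟩ := by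
    exact Subtype.mk_lt_mk.2 (hkeylt _ _ h)
  exact iso.symm.strictMono this

/-- For an injective "position" function, each `T` has a unique bottom-`k` subset. -/
theorem unique_split (f : β → ℕ) (hf : Function.Injective f) {T : Finset β} {k : ℕ}
    (hk : k ≤ T.card) :
    ∃! K : Finset β, K ⊆ T ∧ K.card = k ∧ ∀ a ∈ K, ∀ b ∈ T \ K, f a < f b := by
  classical
  set rank : β → ℕ := fun a => (T.filter fun b => f b < f a).card with hrank
  have hmono : ∀ a ∈ T, ∀ b ∈ T, f a < f b → rank a < rank b := by
    intro a ha b hb hab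
    apply Finset.card_lt_card
    constructor
    · intro c hc
      simp only [Finset.mem_filter] at hc ⊢
      exact ⟨hc.1, hc.2.trans hab⟩
    · intro hsub
      have : a ∈ T.filter fun b' => f b' < f b := by
        simp only [Finset.mem_filter]; exact ⟨ha, hab⟩
      have := hsub this
      simp only [Finset.mem_filter] at this
      omega
  have hiff : ∀ a ∈ T, ∀ b ∈ T, (f a < f b ↔ rank a < rank b) := by
    intro a ha b hb
    constructor
    · exact hmono a ha b hb
    · intro h
      rcases lt_trichotomy (f a) (f b) with h' | h' | h'
      · exact h'
      · exact absurd h (by rw [hf h']; omega)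
      · exact absurd (hmono b hb a ha h') (by omega)
  have hinjOn : Set.InjOn rank T := by
    intro a ha b hb hab
    by_contra hne
    rcases lt_trichotomy (f a) (f b) with h' | h' | h'
    · have := hmono a ha b hb h'; omega
    · exact hne (hf h')
    · have := hmono b hb a ha h'; omega
  have himage : T.image rank = Finset.range T.card := by
    apply Finset.eq_of_subset_of_card_le
    · intro r hr
      simp only [Finset.mem_image] at hr
      obtain ⟨a, ha, rfl⟩ := hr
      simp only [Finset.mem_range]
      calc rank a ≤ (T.erase a).card := by
            apply Finset.card_le_card
            intro c hc
            simp only [Finset.mem_filter] at hc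
            refine Finset.mem_erase.2 ⟨?_, hc.1⟩
            rintro rfl; omega
        _ < T.card := Finset.card_erase_lt_of_mem ha
    · rw [Finset.card_range, Finset.card_image_of_injOn hinjOn]
  set K : Finset β := T.filter fun a => rank a < k with hK
  have hKsub : K ⊆ T := Finset.filter_subset _ _
  have hKcard : K.card = k := by
    have h1 : K.image rank = Finset.range k := by
      have : K.image rank = (T.image rank).filter (· < k) := by
        rw [Finset.filter_image]
      rw [this, himage]
      ext r
      simp only [Finset.mem_filter, Finset.mem_range]
      omega
    have h2 : K.card = (K.image rank).card :=
      (Finset.card_image_of_injOn (hinjOn.mono (by exact_mod_cast hKsub))).symm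
    rw [h2, h1, Finset.card_range]
  have hKsplit : ∀ a ∈ K, ∀ b ∈ T \ K, f a < f b := by
    intro a ha b hb
    rw [Finset.mem_sdiff] at hb
    have hb2 : ¬ rank b < k := by
      intro h
      exact hb.2 (Finset.mem_filter.2 ⟨hb.1, h⟩)
    rw [Finset.mem_filter] at ha
    rw [hiff a (hKsub (Finset.mem_filter.2 ha)) b hb.1]
    omega
  refine ⟨K, ⟨hKsub, hKcard, hKsplit⟩, ?_⟩
  rintro K' ⟨hK'sub, hK'card, hK'split⟩
  by_contra hne
  have h1 : (K' \ K).Nonempty := by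
    rw [Finset.sdiff_nonempty]
    intro hsub
    exact hne (Finset.eq_of_subset_of_card_le hsub (by omega))
  have h2 : (K \ K').Nonempty := by
    rw [Finset.sdiff_nonempty]
    intro hsub
    exact hne ((Finset.eq_of_subset_of_card_le hsub (by omega)).symm)
  obtain ⟨x, hx⟩ := h1
  obtain ⟨y, hy⟩ := h2
  rw [Finset.mem_sdiff] at hx hy
  have hfx : f x < f y := hK'split x hx.1 y (Finset.mem_sdiff.2 ⟨hKsub hy.1, hy.2⟩)
  have hfy : f y < f x := hKsplit y hy.1 x (Finset.mem_sdiff.2 ⟨hK'sub hx.1, hx.2⟩)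
  omega

def splitSet (K L : Finset β) : Finset (β ≃ Fin (Fintype.card β)) :=
  Finset.univ.filter fun π => ∀ a ∈ K, ∀ b ∈ L, ((π a : ℕ) < (π b : ℕ))

def earlySet (G : Finset (Finset β)) (π : β ≃ Fin (Fintype.card β)) : Finset (Finset β) :=
  G.filter fun A => ∃ B ∈ G, Disjoint A B ∧ ∀ a ∈ A, ∀ b ∈ B, ((π a : ℕ) < (π b : ℕ))

def earlyCount (G : Finset (Finset β)) (A : Finset β) : ℕ :=
  (Finset.univ.filter fun π => A ∈ earlySet G π).card

theorem Y_le (G : Finset (Finset β)) (m : Finset β → ℕ) (s : ℕ) (hs : 1 ≤ s)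
    (hd : ∀ B ∈ G, ∑ A ∈ G.filter (fun A => Disjoint B A), m A ≤ s)
    (hGne : ∀ B ∈ G, B.Nonempty)
    (π : β ≃ Fin (Fintype.card β)) :
    ∑ A ∈ earlySet G π, m A ≤ s := by
  classical
  by_cases hne : (earlySet G π).Nonempty
  · set W : Finset (Finset β) :=
      G.filter (fun B => ∃ A ∈ G, Disjoint A B ∧ ∀ a ∈ A, ∀ b ∈ B, ((π a : ℕ) < (π b : ℕ)))
      with hW
    have hWne : W.Nonempty := by
      obtain ⟨A, hA⟩ := hne
      rw [earlySet, Finset.mem_filter] at hA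
      obtain ⟨hAG, B, hBG, hdisj, hsplit⟩ := hA
      exact ⟨B, Finset.mem_filter.2 ⟨hBG, A, hAG, hdisj, hsplit⟩⟩
    set μ : Finset β → ℕ :=
      fun B => if h : B.Nonempty then B.inf' h (fun b => (π b : ℕ)) else 0 with hμ
    obtain ⟨Bs, hBsW, hBsmax⟩ := Finset.exists_max_image W μ hWne
    have hBsG : Bs ∈ G := (Finset.mem_filter.1 hBsW).1
    have key : ∀ A ∈ earlySet G π, Disjoint A Bs := by
      intro A hA
      rw [earlySet, Finset.mem_filter] at hA
      obtain ⟨hAG, B, hBG, hdisj, hsplit⟩ := hA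
      by_contra hnd
      obtain ⟨t, htA, htBs⟩ := Finset.not_disjoint_iff.1 hnd
      have hBW : B ∈ W := Finset.mem_filter.2 ⟨hBG, A, hAG, hdisj, hsplit⟩
      have hBsne : Bs.Nonempty := ⟨t, htBs⟩
      have hBne : B.Nonempty := hGne B hBG
      have h1 : μ Bs ≤ (π t : ℕ) := by
        rw [hμ]; simp only [dif_pos hBsne]
        exact Finset.inf'_le _ htBs
      have h2 : (π t : ℕ) < μ B := by
        rw [hμ]; simp only [dif_pos hBne]
        rw [Nat.lt_iff_add_one_le]
        apply Finset.le_inf'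
        intro b hb
        have := hsplit t htA b hb
        omega
      have h3 : μ B ≤ μ Bs := hBsmax B hBW
      omega
    have hsub : earlySet G π ⊆ G.filter (fun A => Disjoint Bs A) := by
      intro A hA
      have hAG : A ∈ G := Finset.mem_of_mem_filter A hA
      exact Finset.mem_filter.2 ⟨hAG, (key A hA).symm⟩
    calc ∑ A ∈ earlySet G π, m A ≤ ∑ A ∈ G.filter (fun A => Disjoint Bs A), m A :=
          Finset.sum_le_sum_of_subset hsub
      _ ≤ s := hd Bs hBsG
  · rw [Finset.not_nonempty_iff_eq_empty] at hne
    rw [hne, Finset.sum_empty]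
    omega

theorem splitCount_swap {T K : Finset β} (hK : K ⊆ T) {x y : β} (hx : x ∈ K) (hy : y ∈ T \ K) :
    (splitSet K (T \ K)).card = (splitSet (insert y (K.erase x)) (T \ insert y (K.erase x))).card := by
  classical
  rw [Finset.mem_sdiff] at hy
  set K' : Finset β := insert y (K.erase x) with hK'
  have hxy : x ≠ y := fun h => hy.2 (h ▸ hx)
  have hxT : x ∈ T := hK hx
  have hxK' : x ∉ K' := by
    simp only [hK', Finset.mem_insert, Finset.mem_erase]
    push_neg
    exact ⟨hxy, fun h => absurd rfl h⟩
  have hyK' : y ∈ K' := Finset.mem_insert_self _ _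
  set σ : β ≃ β := Equiv.swap x y with hσ
  have hσK'K : ∀ z ∈ K', σ z ∈ K := by
    intro z hz
    rcases Finset.mem_insert.1 hz with rfl | hz2
    · rw [hσ, Equiv.swap_apply_right]; exact hx
    · rw [Finset.mem_erase] at hz2
      rw [hσ, Equiv.swap_apply_of_ne_of_ne hz2.1 (fun h => hy.2 (by rw [← h]; exact hz2.2))]
      exact hz2.2
  have hσKK' : ∀ z ∈ K, σ z ∈ K' := by
    intro z hz
    rcases eq_or_ne z x with rfl | hzx
    · rw [hσ, Equiv.swap_apply_left]; exact hyK'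
    · rw [hσ, Equiv.swap_apply_of_ne_of_ne hzx (fun h => hy.2 (by rw [← h]; exact hz))]
      exact Finset.mem_insert_of_mem (Finset.mem_erase.2 ⟨hzx, hz⟩)
  have hσC'C : ∀ z ∈ T \ K', σ z ∈ T \ K := by
    intro z hz
    rw [Finset.mem_sdiff] at hz
    rcases eq_or_ne z x with rfl | hzx
    · rw [hσ, Equiv.swap_apply_left]; exact Finset.mem_sdiff.2 ⟨hy.1, hy.2⟩
    · have hzy : z ≠ y := fun h => hz.2 (h ▸ hyK')
      rw [hσ, Equiv.swap_apply_of_ne_of_ne hzx hzy]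
      refine Finset.mem_sdiff.2 ⟨hz.1, fun hzK => hz.2 ?_⟩
      exact Finset.mem_insert_of_mem (Finset.mem_erase.2 ⟨hzx, hzK⟩)
  have hσCC' : ∀ z ∈ T \ K, σ z ∈ T \ K' := by
    intro z hz
    rw [Finset.mem_sdiff] at hz
    rcases eq_or_ne z y with rfl | hzy
    · rw [hσ, Equiv.swap_apply_right]; exact Finset.mem_sdiff.2 ⟨hxT, hxK'⟩
    · have hzx : z ≠ x := fun h => hz.2 (h ▸ hx)
      rw [hσ, Equiv.swap_apply_of_ne_of_ne hzx hzy]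
      refine Finset.mem_sdiff.2 ⟨hz.1, fun hzK' => ?_⟩
      rcases Finset.mem_insert.1 hzK' with rfl | h2
      · exact hzy rfl
      · exact hz.2 (Finset.mem_erase.1 h2).2
  unfold splitSet
  apply Finset.card_bij' (fun π _ => σ.trans π) (fun π _ => σ.trans π)
  · intro π hπ
    simp only [Finset.mem_filter, Finset.mem_univ, true_and] at hπ ⊢
    intro a ha b hb
    exact hπ (σ a) (hσK'K a ha) (σ b) (hσC'C b hb)
  · intro π hπ
    simp only [Finset.mem_filter, Finset.mem_univ, true_and] at hπ ⊢
    intro a ha b hb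
    exact hπ (σ a) (hσKK' a ha) (σ b) (hσCC' b hb)
  · intro π _
    ext z
    simp [hσ, Equiv.swap_apply_self]
  · intro π _
    ext z
    simp [hσ, Equiv.swap_apply_self]

theorem splitCount_const (n : ℕ) : ∀ {T K K' : Finset β}, (K' \ K).card = n → K ⊆ T → K' ⊆ T →
    K.card = K'.card → (splitSet K (T \ K)).card = (splitSet K' (T \ K')).card := by
  induction n with
  | zero =>
    intro T K K' h hK hK' hc
    have hsub : K' ⊆ K := by
      rw [← Finset.sdiff_eq_empty_iff_subset, ← Finset.card_eq_zero]; exact h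
    rw [Finset.eq_of_subset_of_card_le hsub (le_of_eq hc)]
  | succ n ih =>
    intro T K K' h hK hK' hc
    have h1 : (K' \ K).Nonempty := by rw [← Finset.card_pos]; omega
    obtain ⟨y, hy⟩ := h1
    have hy' := Finset.mem_sdiff.1 hy
    have h2 : (K \ K').Nonempty := by
      rw [Finset.sdiff_nonempty]
      intro hsub
      have : K = K' := Finset.eq_of_subset_of_card_le hsub (le_of_eq hc.symm)
      rw [this, Finset.sdiff_self, Finset.card_empty] at h
      omega
    obtain ⟨x, hx⟩ := h2
    have hx' := Finset.mem_sdiff.1 hx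
    set K₂ : Finset β := insert y (K.erase x) with hK₂
    have hstep := splitCount_swap hK hx'.1 (Finset.mem_sdiff.2 ⟨hK' hy'.1, hy'.2⟩)
    have hK₂T : K₂ ⊆ T := by
      intro z hz
      rcases Finset.mem_insert.1 hz with rfl | h2
      · exact hK' hy'.1
      · exact hK (Finset.erase_subset _ _ h2)
    have hK₂c : K₂.card = K.card := by
      rw [hK₂, Finset.card_insert_of_notMem (fun h => hy'.2 (Finset.erase_subset _ _ h)),
        Finset.card_erase_of_mem hx'.1]
      have : 1 ≤ K.card := Finset.card_pos.2 ⟨x, hx'.1⟩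
      omega
    have hdiff : K' \ K₂ = (K' \ K).erase y := by
      ext z
      simp only [Finset.mem_sdiff, Finset.mem_erase, hK₂, Finset.mem_insert, Finset.mem_erase]
      constructor
      · rintro ⟨hz1, hz2⟩
        push_neg at hz2
        have hzx : z ≠ x := fun h => hx'.2 (by rw [← h]; exact hz1)
        exact ⟨hz2.1, hz1, hz2.2 hzx⟩
      · rintro ⟨hzy, hz1, hz2⟩
        refine ⟨hz1, ?_⟩
        push_neg
        exact ⟨hzy, fun _ => hz2⟩
    have hdc : (K' \ K₂).card = n := by
      rw [hdiff, Finset.card_erase_of_mem hy]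
      omega
    rw [hstep]
    exact ih hdc hK₂T hK' (by rw [hK₂c, hc])

theorem splitCount_mul {T K : Finset β} {k : ℕ} (hT : T.card = 2 * k) (hK : K ⊆ T)
    (hKc : K.card = k) :
    (splitSet K (T \ K)).card * Nat.choose (2 * k) k = Nat.factorial (Fintype.card β) := by
  classical
  have hsum : ∑ K' ∈ T.powersetCard k, (splitSet K' (T \ K')).card =
      Nat.factorial (Fintype.card β) := by
    have h1 : ∀ K' : Finset β, (splitSet K' (T \ K')).card =
        ∑ π : β ≃ Fin (Fintype.card β),
          if (∀ a ∈ K', ∀ b ∈ T \ K', ((π a : ℕ) < (π b : ℕ))) then 1 else 0 := by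
      intro K'
      rw [splitSet, Finset.card_filter]
    calc ∑ K' ∈ T.powersetCard k, (splitSet K' (T \ K')).card
        = ∑ K' ∈ T.powersetCard k, ∑ π : β ≃ Fin (Fintype.card β),
            if (∀ a ∈ K', ∀ b ∈ T \ K', ((π a : ℕ) < (π b : ℕ))) then 1 else 0 :=
          Finset.sum_congr rfl fun K' _ => h1 K'
      _ = ∑ π : β ≃ Fin (Fintype.card β), ∑ K' ∈ T.powersetCard k,
            if (∀ a ∈ K', ∀ b ∈ T \ K', ((π a : ℕ) < (π b : ℕ))) then 1 else 0 :=
          Finset.sum_comm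
      _ = ∑ _π : β ≃ Fin (Fintype.card β), 1 := by
          apply Finset.sum_congr rfl
          intro π _
          have hf : Function.Injective (fun b : β => (π b : ℕ)) :=
            fun a b h => π.injective (Fin.val_injective h)
          obtain ⟨K₀, hK₀, huniq⟩ := unique_split _ hf (T := T) (k := k) (by rw [hT]; omega)
          have hfilter : (T.powersetCard k).filter
              (fun K' => ∀ a ∈ K', ∀ b ∈ T \ K', ((π a : ℕ) < (π b : ℕ))) = {K₀} := by
            apply Finset.eq_singleton_iff_unique_mem.2
            constructor
            · exact Finset.mem_filter.2
                ⟨Finset.mem_powersetCard.2 ⟨hK₀.1, hK₀.2.1⟩, hK₀.2.2⟩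
            · intro K' hK'
              rw [Finset.mem_filter, Finset.mem_powersetCard] at hK'
              exact huniq K' ⟨hK'.1.1, hK'.1.2, hK'.2⟩
          rw [← Finset.card_filter, hfilter, Finset.card_singleton]
      _ = Fintype.card (β ≃ Fin (Fintype.card β)) := by
          rw [Finset.sum_const, Finset.card_univ, smul_eq_mul, mul_one]
      _ = Nat.factorial (Fintype.card β) := Fintype.card_equiv (Fintype.equivFin β)
  have h2 : ∀ K' ∈ T.powersetCard k, (splitSet K' (T \ K')).card = (splitSet K (T \ K)).card := by
    intro K' hK'
    rw [Finset.mem_powersetCard] at hK'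
    exact (splitCount_const ((K' \ K).card) rfl hK hK'.1 (by rw [hKc, hK'.2])).symm
  rw [Finset.sum_congr rfl h2, Finset.sum_const, Finset.card_powersetCard, hT,
    smul_eq_mul] at hsum
  rw [mul_comm]
  exact hsum

end OrderTools

theorem main_fintype {β : Type*} [Fintype β] [DecidableEq β] (k s : ℕ) (hk : 1 ≤ k)
    (hs : 1 ≤ s) (F : Multiset (Finset β))
    (huniform : ∀ A ∈ F, A.card = k)
    (hai : ∀ A ∈ F,
      1 ≤ Multiset.card (F.filter fun B => Disjoint A B) ∧
      Multiset.card (F.filter fun B => Disjoint A B) ≤ s)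
    (hcard : Multiset.card F = s * Nat.choose (2 * k) k) :
    ∃ S : Finset β, S.card = 2 * k ∧ F = s • (Finset.powersetCard k S).val := by
  classical
  set G : Finset (Finset β) := F.toFinset with hG
  set m : Finset β → ℕ := fun A => F.count A with hm
  set d : Finset β → ℕ := fun A => Multiset.card (F.filter fun B => Disjoint A B) with hd
  have hmemG : ∀ {A : Finset β}, A ∈ G ↔ A ∈ F := fun {A} => Multiset.mem_toFinset
  have hdval : ∀ A : Finset β, d A = Multiset.card (F.filter fun B => Disjoint A B) :=
    fun _ => rfl
  have hmval : ∀ A : Finset β, m A = F.count A := fun _ => rfl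
  have hcardG : ∀ A ∈ G, A.card = k := fun A hA => huniform A (hmemG.1 hA)
  have hne_of_mem : ∀ A ∈ G, A.Nonempty := by
    intro A hA
    rw [← Finset.card_pos, hcardG A hA]
    omega
  have hd1 : ∀ A ∈ G, 1 ≤ d A := fun A hA => (hai A (hmemG.1 hA)).1
  have hds : ∀ A ∈ G, d A ≤ s := fun A hA => (hai A (hmemG.1 hA)).2
  have hm1 : ∀ A ∈ G, 1 ≤ m A := by
    intro A hA
    exact Multiset.count_pos.2 (hmemG.1 hA)
  have hCpos : 0 < Nat.choose (2 * k) k := Nat.choose_pos (by omega)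
  have hmsum : ∑ A ∈ G, m A = s * Nat.choose (2 * k) k := by
    rw [hG, hm]
    rw [Multiset.toFinset_sum_count_eq, hcard]
  have hdsum : ∀ A : Finset β, d A = ∑ B ∈ G.filter (fun B => Disjoint A B), m B := by
    intro A
    rw [hdval]
    conv_lhs => rw [← Multiset.toFinset_sum_count_eq (F.filter fun B => Disjoint A B)]
    rw [Multiset.toFinset_filter, ← hG]
    apply Finset.sum_congr rfl
    intro B hB
    rw [Finset.mem_filter] at hB
    rw [Multiset.count_filter, if_pos hB.2, hmval]
  have hdd : ∀ B ∈ G, ∑ A ∈ G.filter (fun A => Disjoint B A), m A ≤ s := by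
    intro B hB
    calc ∑ A ∈ G.filter (fun A => Disjoint B A), m A = d B := (hdsum B).symm
      _ ≤ s := hds B hB
  have hpartner : ∀ A ∈ G, ∃ B, B ∈ G ∧ Disjoint A B := by
    intro A hA
    have h1 : 0 < Multiset.card (F.filter fun B => Disjoint A B) := by
      have := hd1 A hA
      rw [hdval] at this
      omega
    obtain ⟨B, hB⟩ := Multiset.exists_mem_of_ne_zero (Multiset.card_pos.1 h1)
    rw [Multiset.mem_filter] at hB
    exact ⟨B, hmemG.2 hB.1, hB.2⟩
  have hmles : ∀ A ∈ G, m A ≤ s := by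
    intro A hA
    obtain ⟨B, hBG, hdisj⟩ := hpartner A hA
    have h1 : m A ≤ d B := by
      rw [hmval, hdval]
      have hle : F.filter (fun C => C = A) ≤ F.filter (fun C => Disjoint B C) := by
        apply Multiset.monotone_filter_right
        intro C hC
        rw [hC]
        exact hdisj.symm
      calc F.count A = Multiset.card (F.filter (fun C => C = A)) := by
            rw [Multiset.filter_eq', Multiset.card_replicate]
        _ ≤ Multiset.card (F.filter (fun C => Disjoint B C)) := Multiset.card_le_card hle
    exact h1.trans (hds B hBG)
  have hNmul : ∀ A B : Finset β, A ∈ G → B ∈ G → Disjoint A B →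
      (splitSet A B).card * Nat.choose (2 * k) k = Nat.factorial (Fintype.card β) := by
    intro A B hA hB hdisj
    have hT : (A ∪ B).card = 2 * k := by
      rw [Finset.card_union_of_disjoint hdisj, hcardG A hA, hcardG B hB]
      omega
    have hsd : (A ∪ B) \ A = B := Finset.union_sdiff_cancel_left hdisj
    have := splitCount_mul hT Finset.subset_union_left (hcardG A hA)
    rwa [hsd] at this
  -- partner choice
  have hpick : ∀ A : Finset β, ∃ B, A ∈ G → (B ∈ G ∧ Disjoint A B) := by
    intro A
    by_cases h : A ∈ G
    · obtain ⟨B, hB⟩ := hpartner A h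
      exact ⟨B, fun _ => hB⟩
    · exact ⟨∅, fun h' => absurd h' h⟩
  choose pf hpf using hpick
  have hGne : G.Nonempty := by
    rw [hG]
    apply Multiset.toFinset_nonempty.2
    intro h0
    rw [h0] at hcard
    simp at hcard
    rcases hcard with h | h
    · omega
    · omega
  obtain ⟨A₀, hA₀⟩ := hGne
  set e0 : ℕ := (splitSet A₀ (pf A₀)).card with he0def
  have he0C : e0 * Nat.choose (2 * k) k = Nat.factorial (Fintype.card β) :=
    hNmul A₀ (pf A₀) hA₀ (hpf A₀ hA₀).1 (hpf A₀ hA₀).2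
  have hNeq : ∀ A B : Finset β, A ∈ G → B ∈ G → Disjoint A B → (splitSet A B).card = e0 := by
    intro A B hA hB hdisj
    have h1 := hNmul A B hA hB hdisj
    rw [← he0C] at h1
    exact Nat.eq_of_mul_eq_mul_right hCpos h1
  have hEsub : ∀ A B : Finset β, A ∈ G → B ∈ G → Disjoint A B →
      splitSet A B ⊆ Finset.univ.filter (fun π => A ∈ earlySet G π) := by
    intro A B hA hB hdisj π hπ
    rw [splitSet, Finset.mem_filter] at hπ
    refine Finset.mem_filter.2 ⟨Finset.mem_univ _, ?_⟩
    rw [earlySet, Finset.mem_filter]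
    exact ⟨hA, B, hB, hdisj, hπ.2⟩
  -- global counting
  have hYsum_eq : ∑ π : β ≃ Fin (Fintype.card β), ∑ A ∈ earlySet G π, m A
      = ∑ A ∈ G, m A * earlyCount G A := by
    have h1 : ∀ π : β ≃ Fin (Fintype.card β),
        ∑ A ∈ earlySet G π, m A = ∑ A ∈ G, if A ∈ earlySet G π then m A else 0 := by
      intro π
      rw [Finset.sum_ite_mem]
      congr 1
      exact (Finset.inter_eq_right.2 (Finset.filter_subset _ _)).symm
    calc ∑ π : β ≃ Fin (Fintype.card β), ∑ A ∈ earlySet G π, m A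
        = ∑ π : β ≃ Fin (Fintype.card β), ∑ A ∈ G, if A ∈ earlySet G π then m A else 0 :=
          Finset.sum_congr rfl fun π _ => h1 π
      _ = ∑ A ∈ G, ∑ π : β ≃ Fin (Fintype.card β), if A ∈ earlySet G π then m A else 0 :=
          Finset.sum_comm
      _ = ∑ A ∈ G, m A * earlyCount G A := by
          apply Finset.sum_congr rfl
          intro A _
          rw [← Finset.sum_filter, Finset.sum_const, earlyCount, smul_eq_mul, mul_comm]
  have hcardOmega : Fintype.card (β ≃ Fin (Fintype.card β)) = Nat.factorial (Fintype.card β) :=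
    Fintype.card_equiv (Fintype.equivFin β)
  have hearly_ge : ∀ A ∈ G, e0 ≤ earlyCount G A := by
    intro A hA
    rw [← hNeq A (pf A) hA (hpf A hA).1 (hpf A hA).2]
    exact Finset.card_le_card (hEsub A (pf A) hA (hpf A hA).1 (hpf A hA).2)
  have hsum_e0 : ∑ A ∈ G, m A * e0 = s * Nat.factorial (Fintype.card β) := by
    rw [← Finset.sum_mul, hmsum, ← he0C]
    ring
  have hchain : ∑ A ∈ G, m A * earlyCount G A = s * Nat.factorial (Fintype.card β) ∧
      (∀ A ∈ G, earlyCount G A = e0) ∧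
      (∀ π : β ≃ Fin (Fintype.card β), ∑ A ∈ earlySet G π, m A = s) := by
    have hub : ∑ A ∈ G, m A * earlyCount G A ≤ s * Nat.factorial (Fintype.card β) := by
      rw [← hYsum_eq]
      calc ∑ π : β ≃ Fin (Fintype.card β), ∑ A ∈ earlySet G π, m A
          ≤ ∑ _π : β ≃ Fin (Fintype.card β), s :=
            Finset.sum_le_sum (fun π _ => Y_le G m s hs hdd hne_of_mem π)
        _ = s * Nat.factorial (Fintype.card β) := by
            rw [Finset.sum_const, Finset.card_univ, hcardOmega, smul_eq_mul, mul_comm]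
    have hlb : ∑ A ∈ G, m A * e0 ≤ ∑ A ∈ G, m A * earlyCount G A :=
      Finset.sum_le_sum (fun A hA => Nat.mul_le_mul_left _ (hearly_ge A hA))
    have heq1 : ∑ A ∈ G, m A * earlyCount G A = s * Nat.factorial (Fintype.card β) := by
      omega
    refine ⟨heq1, ?_, ?_⟩
    · have h2 : ∑ A ∈ G, m A * e0 = ∑ A ∈ G, m A * earlyCount G A := by omega
      have h3 := (Finset.sum_eq_sum_iff_of_le
        (fun A hA => Nat.mul_le_mul_left (m A) (hearly_ge A hA))).1 h2
      intro A hA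
      have h4 := h3 A hA
      have h5 := hm1 A hA
      exact (Nat.eq_of_mul_eq_mul_left (by omega) h4).symm
    · have h2 : ∑ π : β ≃ Fin (Fintype.card β), ∑ A ∈ earlySet G π, m A
          = ∑ _π : β ≃ Fin (Fintype.card β), s := by
        rw [hYsum_eq, heq1, Finset.sum_const, Finset.card_univ, hcardOmega, smul_eq_mul,
          mul_comm]
      have h3 := (Finset.sum_eq_sum_iff_of_le
        (fun π _ => Y_le G m s hs hdd hne_of_mem π)).1 h2
      intro π
      exact h3 π (Finset.mem_univ π)
  obtain ⟨-, hearly_eq, hY_eq⟩ := hchain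
  -- uniqueness of partners
  have hfl : ∀ (π : β ≃ Fin (Fintype.card β)) (a b : β), π a < π b → ((π a : ℕ) < (π b : ℕ)) :=
    fun π a b h => h
  have huniqpart : ∀ A B B' : Finset β, A ∈ G → B ∈ G → B' ∈ G →
      Disjoint A B → Disjoint A B' → B = B' := by
    intro A B B' hA hB hB' hAB hAB'
    by_contra hne
    have hxex : (B \ B').Nonempty := by
      rw [Finset.sdiff_nonempty]
      intro hsub
      exact hne (Finset.eq_of_subset_of_card_le hsub
        (by rw [hcardG B hB, hcardG B' hB']))
    obtain ⟨x, hx⟩ := hxex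
    rw [Finset.mem_sdiff] at hx
    have hset : ∀ C : Finset β, C ∈ G → Disjoint A C →
        splitSet A C = Finset.univ.filter (fun π => A ∈ earlySet G π) := by
      intro C hC hAC
      apply Finset.eq_of_subset_of_card_le (hEsub A C hA hC hAC)
      rw [hNeq A C hA hC hAC]
      have h5 := hearly_eq A hA
      rw [earlyCount] at h5
      omega
    have hsetBB' : splitSet A B = splitSet A B' := by
      rw [hset B hB hAB, hset B' hB' hAB']
    set w : β → ℕ := fun z => if z = x then 0 else if z ∈ A then 1 else 2 with hw
    obtain ⟨π, hπ⟩ := exists_mono_equiv w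
    have hxA : x ∉ A := Finset.disjoint_right.1 hAB hx.1
    have hπB' : π ∈ splitSet A B' := by
      rw [splitSet, Finset.mem_filter]
      refine ⟨Finset.mem_univ _, ?_⟩
      intro a ha b hb
      have hax : a ≠ x := fun h => hxA (h ▸ ha)
      have hbx : b ≠ x := fun h => hx.2 (h ▸ hb)
      have hbA : b ∉ A := Finset.disjoint_right.1 hAB' hb
      refine hfl π a b (hπ a b ?_)
      rw [hw]
      simp only [if_neg hax, if_pos ha, if_neg hbx, if_neg hbA]
      omega
    have hπB : π ∈ splitSet A B := by rw [hsetBB']; exact hπB'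
    rw [splitSet, Finset.mem_filter] at hπB
    obtain ⟨a₀, ha₀⟩ := hne_of_mem A hA
    have h1 : (π a₀ : ℕ) < (π x : ℕ) := hπB.2 a₀ ha₀ x hx.1
    have h2 : (π x : ℕ) < (π a₀ : ℕ) := by
      refine hfl π x a₀ (hπ x a₀ ?_)
      have hax : a₀ ≠ x := fun h => hxA (h ▸ ha₀)
      rw [hw]
      simp only [if_pos ha₀, if_neg hax, if_true, eq_self_iff_true, ite_true]
      omega
    omega
  -- multiplicity = s
  have hms : ∀ A ∈ G, m A = s := by
    intro A₁ hA₁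
    have hB₁G : pf A₁ ∈ G := (hpf A₁ hA₁).1
    have hdisj₁ : Disjoint A₁ (pf A₁) := (hpf A₁ hA₁).2
    set B₁ : Finset β := pf A₁ with hB₁def
    set w : β → ℕ := fun z => if z ∈ A₁ then 0 else if z ∈ B₁ then 1 else 2 with hw
    obtain ⟨π, hπ⟩ := exists_mono_equiv w
    have hwlt : ∀ a ∈ A₁, ∀ b ∈ B₁, ((π a : ℕ) < (π b : ℕ)) := by
      intro a ha b hb
      have hbA : b ∉ A₁ := Finset.disjoint_right.1 hdisj₁ hb
      refine hfl π a b (hπ a b ?_)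
      rw [hw]
      simp only [if_pos ha, if_neg hbA, if_pos hb]
      omega
    have hE : earlySet G π = {A₁} := by
      apply Finset.eq_singleton_iff_unique_mem.2
      constructor
      · rw [earlySet, Finset.mem_filter]
        exact ⟨hA₁, B₁, hB₁G, hdisj₁, hwlt⟩
      · intro A hA
        rw [earlySet, Finset.mem_filter] at hA
        obtain ⟨hAG, B, hBG, hdisj, hsplit⟩ := hA
        by_contra hne
        rcases eq_or_ne A B₁ with rfl | hAB₁ne
        · have hBA₁ : B = A₁ := huniqpart B₁ B A₁ hB₁G hBG hA₁ hdisj hdisj₁.symm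
          rw [hBA₁] at hsplit
          obtain ⟨a₁, ha₁⟩ := hne_of_mem A₁ hA₁
          obtain ⟨b₁, hb₁⟩ := hne_of_mem B₁ hB₁G
          have h1 : (π b₁ : ℕ) < (π a₁ : ℕ) := hsplit b₁ hb₁ a₁ ha₁
          have h2 : (π a₁ : ℕ) < (π b₁ : ℕ) := hwlt a₁ ha₁ b₁ hb₁
          omega
        · have hc : ¬ Disjoint A B₁ := by
            intro hd2
            exact hne (huniqpart B₁ A A₁ hB₁G hAG hA₁ hd2.symm hdisj₁.symm)
          obtain ⟨c, hcA, hcB₁⟩ := Finset.not_disjoint_iff.1 hc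
          have hd3 : ¬ Disjoint A₁ B := by
            intro hd4
            have hBB₁ : B = B₁ := huniqpart A₁ B B₁ hA₁ hBG hB₁G hd4 hdisj₁
            rw [hBB₁] at hdisj
            exact hc hdisj
          obtain ⟨e, heA₁, heB⟩ := Finset.not_disjoint_iff.1 hd3
          have h1 : (π c : ℕ) < (π e : ℕ) := hsplit c hcA e heB
          have h2 : (π e : ℕ) < (π c : ℕ) := by
            refine hfl π e c (hπ e c ?_)
            have hcA₁ : c ∉ A₁ := Finset.disjoint_right.1 hdisj₁ hcB₁
            rw [hw]
            simp only [if_pos heA₁, if_neg hcA₁, if_pos hcB₁]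
            omega
          omega
    have hYπ := hY_eq π
    rw [hE, Finset.sum_singleton] at hYπ
    exact hYπ
  -- swap lemma
  have hswap : ∀ P Q : Finset β, P ∈ G → Q ∈ G → Disjoint P Q → ∀ p ∈ P, ∀ q ∈ Q,
      insert q (P.erase p) ∈ G ∧ ∃ D ∈ G, Disjoint (insert q (P.erase p)) D ∧ p ∈ D ∧
        (∀ z ∈ D, z ∈ P → z = p) := by
    intro P Q hP hQ hPQ p hp q hq
    have hqP : q ∉ P := Finset.disjoint_right.1 hPQ hq
    have hpQ : p ∉ Q := Finset.disjoint_left.1 hPQ hp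
    by_cases hk1 : k = 1
    · have hPp : P = {p} := by
        obtain ⟨z, hz⟩ := Finset.card_eq_one.1 (by rw [hcardG P hP, hk1])
        rw [hz] at hp ⊢
        rw [Finset.mem_singleton] at hp
        rw [hp]
      have hQq : Q = {q} := by
        obtain ⟨z, hz⟩ := Finset.card_eq_one.1 (by rw [hcardG Q hQ, hk1])
        rw [hz] at hq ⊢
        rw [Finset.mem_singleton] at hq
        rw [hq]
      have hCQ : insert q (P.erase p) = Q := by
        rw [hPp, hQq, Finset.erase_singleton]
        simp
      refine ⟨by rw [hCQ]; exact hQ, P, hP, by rw [hCQ]; exact hPQ.symm, hp,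
        fun z hz _ => by rw [hPp] at hz; exact Finset.mem_singleton.1 hz⟩
    · have hk2 : 2 ≤ k := by omega
      set C₁ : Finset β := insert q (P.erase p) with hC₁
      set w : β → ℕ := fun z => if z ∈ P then (if z = p then 2 else 0)
        else if z = q then 1 else if z ∈ Q then 3 else 4 with hw
      obtain ⟨π, hπ⟩ := exists_mono_equiv w
      have hwp : w p = 2 := by rw [hw]; simp [hp]
      have hwq : w q = 1 := by rw [hw]; simp [hqP]
      have hEne : (earlySet G π).Nonempty := by
        have h0 := hY_eq π
        by_contra h
        rw [Finset.not_nonempty_iff_eq_empty] at h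
        rw [h, Finset.sum_empty] at h0
        omega
      obtain ⟨C₀, hC₀E⟩ := hEne
      rw [earlySet, Finset.mem_filter] at hC₀E
      obtain ⟨hC₀G, D₀, hD₀G, hdisj₀', hsplit⟩ := hC₀E
      have hPep : (P.erase p).Nonempty := by
        rw [← Finset.card_pos, Finset.card_erase_of_mem hp, hcardG P hP]
        omega
      have hC₀P : C₀ ≠ P := by
        intro h
        rw [h] at hsplit hdisj₀'
        have hD₀Q : D₀ = Q := huniqpart P D₀ Q hP hD₀G hQ hdisj₀' hPQ
        rw [hD₀Q] at hsplit
        have h1 : (π p : ℕ) < (π q : ℕ) := hsplit p hp q hq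
        have h2 : (π q : ℕ) < (π p : ℕ) := hfl _ _ _ (hπ q p (by rw [hwq, hwp]; omega))
        omega
      have hC₀Q : C₀ ≠ Q := by
        intro h
        rw [h] at hsplit hdisj₀'
        have hD₀P : D₀ = P := huniqpart Q D₀ P hQ hD₀G hP hdisj₀' hPQ.symm
        rw [hD₀P] at hsplit
        obtain ⟨a, ha⟩ := hPep
        have haP : a ∈ P := Finset.mem_of_mem_erase ha
        have hwa : w a = 0 := by
          obtain ⟨hap, haP'⟩ := Finset.mem_erase.1 ha
          rw [hw]; simp [haP', hap]
        have h1 : (π q : ℕ) < (π a : ℕ) := hsplit q hq a haP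
        have h2 : (π a : ℕ) < (π q : ℕ) := hfl _ _ _ (hπ a q (by rw [hwa, hwq]; omega))
        omega
      have hCQnd : ¬ Disjoint C₀ Q := fun h =>
        hC₀P (huniqpart Q C₀ P hQ hC₀G hP h.symm hPQ.symm)
      have hD₀Pnd : ¬ Disjoint D₀ P := by
        intro h
        have hD₀Q : D₀ = Q := huniqpart P D₀ Q hP hD₀G hQ h.symm hPQ
        rw [hD₀Q] at hdisj₀'
        exact hCQnd hdisj₀'
      have hqC₀ : q ∈ C₀ := by
        obtain ⟨c, hcC₀, hcQ⟩ := Finset.not_disjoint_iff.1 hCQnd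
        rcases eq_or_ne c q with rfl | hcq
        · exact hcC₀
        · exfalso
          obtain ⟨dd, hdD₀, hdP⟩ := Finset.not_disjoint_iff.1 hD₀Pnd
          have h1 : (π c : ℕ) < (π dd : ℕ) := hsplit c hcC₀ dd hdD₀
          have hcP : c ∉ P := Finset.disjoint_right.1 hPQ hcQ
          have hwc : w c = 3 := by rw [hw]; simp [hcP, hcq, hcQ]
          have hwd : w dd ≤ 2 := by
            rw [hw]; simp only [if_pos hdP]; split <;> omega
          have h2 : (π dd : ℕ) < (π c : ℕ) := hfl _ _ _ (hπ dd c (by omega))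
          omega
      have hDP : ∀ z ∈ D₀, z ∈ P → z = p := by
        intro z hzD hzP
        by_contra hzp
        have h1 : (π q : ℕ) < (π z : ℕ) := hsplit q hqC₀ z hzD
        have hwz : w z = 0 := by rw [hw]; simp [hzP, hzp]
        have h2 : (π z : ℕ) < (π q : ℕ) := hfl _ _ _ (hπ z q (by rw [hwz, hwq]; omega))
        omega
      have hpD₀ : p ∈ D₀ := by
        obtain ⟨dd, hdD₀, hdP⟩ := Finset.not_disjoint_iff.1 hD₀Pnd
        have h0 := hDP dd hdD₀ hdP
        rw [← h0]
        exact hdD₀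
      have hC₀C₁ : C₀ = C₁ := by
        apply Finset.eq_of_subset_of_card_le
        · intro c hc
          have h1 : (π c : ℕ) < (π p : ℕ) := hsplit c hc p hpD₀
          by_contra hcC₁
          rw [hC₁, Finset.mem_insert, Finset.mem_erase] at hcC₁
          push_neg at hcC₁
          have hcp : c ≠ p := fun h =>
            (Finset.disjoint_left.1 hdisj₀' hc) (h ▸ hpD₀)
          have hcP : c ∉ P := hcC₁.2 hcp
          have hwc : 3 ≤ w c := by
            rw [hw]; simp only [if_neg hcP, if_neg hcC₁.1]; split <;> omega
          have h2 : (π p : ℕ) < (π c : ℕ) := hfl _ _ _ (hπ p c (by omega))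
          omega
        · rw [hC₁, Finset.card_insert_of_notMem
              (fun h => hqP (Finset.mem_of_mem_erase h)),
            Finset.card_erase_of_mem hp, hcardG C₀ hC₀G, hcardG P hP]
          omega
      exact ⟨hC₀C₁ ▸ hC₀G, D₀, hD₀G, hC₀C₁ ▸ hdisj₀', hpD₀, hDP⟩
  -- complement lemma
  have hcompl : ∀ P Q : Finset β, P ∈ G → Q ∈ G → Disjoint P Q → ∀ p ∈ P, ∀ q ∈ Q,
      insert p (Q.erase q) ∈ G := by
    intro P Q hP hQ hPQ p hp q hq
    have hqP : q ∉ P := Finset.disjoint_right.1 hPQ hq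
    have hpQ : p ∉ Q := Finset.disjoint_left.1 hPQ hp
    obtain ⟨hCG, D, hDG, hCD, hpD, hDP⟩ := hswap P Q hP hQ hPQ p hp q hq
    have hqC : q ∈ insert q (P.erase p) := Finset.mem_insert_self _ _
    have hqD : q ∉ D := Finset.disjoint_left.1 hCD hqC
    have hDsub : D ⊆ insert p (Q.erase q) := by
      intro z hzD
      rcases eq_or_ne z p with rfl | hzp
      · exact Finset.mem_insert_self _ _
      · have hzP : z ∉ P := fun h => hzp (hDP z hzD h)
        have hzq : z ≠ q := fun h => hqD (h ▸ hzD)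
        have hzQ : z ∈ Q := by
          by_contra hzQ
          obtain ⟨hEG, -⟩ := hswap (insert q (P.erase p)) D hCG hDG hCD q hqC z hzD
          have hCeq : (insert q (P.erase p)).erase q = P.erase p :=
            Finset.erase_insert (fun h => hqP (Finset.mem_of_mem_erase h))
          rw [hCeq] at hEG
          have hEQdisj : Disjoint Q (insert z (P.erase p)) := by
            rw [Finset.disjoint_left]
            intro u huQ huE
            rcases Finset.mem_insert.1 huE with rfl | h2
            · exact hzQ huQ
            · exact (Finset.disjoint_right.1 hPQ huQ) (Finset.mem_of_mem_erase h2)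
          have hEP : insert z (P.erase p) = P :=
            huniqpart Q (insert z (P.erase p)) P hQ hEG hP hEQdisj hPQ.symm
          have hzP' : z ∈ P := by
            rw [← hEP]
            exact Finset.mem_insert_self _ _
          exact hzP hzP'
        exact Finset.mem_insert_of_mem (Finset.mem_erase.2 ⟨hzq, hzQ⟩)
    have hcards : (insert p (Q.erase q)).card ≤ D.card := by
      rw [Finset.card_insert_of_notMem (fun h => hpQ (Finset.mem_of_mem_erase h)),
        Finset.card_erase_of_mem hq, hcardG D hDG, hcardG Q hQ]
      omega
    have hDeq : D = insert p (Q.erase q) := Finset.eq_of_subset_of_card_le hDsub hcards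
    rw [← hDeq]
    exact hDG
  -- closure
  set B₀ : Finset β := pf A₀ with hB₀def
  have hB₀ : B₀ ∈ G := (hpf A₀ hA₀).1
  have hdisj₀ : Disjoint A₀ B₀ := (hpf A₀ hA₀).2
  set S : Finset β := A₀ ∪ B₀ with hSdef
  have hScard : S.card = 2 * k := by
    rw [hSdef, Finset.card_union_of_disjoint hdisj₀, hcardG A₀ hA₀, hcardG B₀ hB₀]
    omega
  have hclosure : ∀ j : ℕ, ∀ K : Finset β, K ⊆ S → K.card = k → (K \ A₀).card = j →
      K ∈ G ∧ S \ K ∈ G := by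
    intro j
    induction j with
    | zero =>
      intro K hKS hKc hKd
      have hsub : K ⊆ A₀ := by
        rw [← Finset.sdiff_eq_empty_iff_subset]
        exact Finset.card_eq_zero.1 hKd
      have hKA₀ : K = A₀ := Finset.eq_of_subset_of_card_le hsub
        (by rw [hcardG A₀ hA₀, hKc])
      have hSB : S \ K = B₀ := by
        rw [hKA₀, hSdef]
        exact Finset.union_sdiff_cancel_left hdisj₀
      rw [hSB, hKA₀]
      exact ⟨hA₀, hB₀⟩
    | succ j ih =>
      intro K hKS hKc hKd
      have hqex : (K \ A₀).Nonempty := by rw [← Finset.card_pos]; omega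
      obtain ⟨q, hqd⟩ := hqex
      have hq' := Finset.mem_sdiff.1 hqd
      have hpex : (A₀ \ K).Nonempty := by
        rw [← Finset.card_pos]
        have h1 : (A₀ \ K).card + (A₀ ∩ K).card = k := by
          rw [Finset.card_sdiff_add_card_inter, hcardG A₀ hA₀]
        have h2 : (K \ A₀).card + (K ∩ A₀).card = k := by
          rw [Finset.card_sdiff_add_card_inter, hKc]
        have h3 : (A₀ ∩ K).card = (K ∩ A₀).card := by rw [Finset.inter_comm]
        omega
      obtain ⟨p, hpd⟩ := hpex
      have hp' := Finset.mem_sdiff.1 hpd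
      set K' : Finset β := insert p (K.erase q) with hK'
      have hpq : p ≠ q := fun h => hp'.2 (by rw [h]; exact hq'.1)
      have hK'S : K' ⊆ S := by
        intro z hz
        rcases Finset.mem_insert.1 hz with rfl | hz2
        · rw [hSdef]; exact Finset.mem_union_left _ hp'.1
        · exact hKS (Finset.mem_of_mem_erase hz2)
      have hK'c : K'.card = k := by
        rw [hK', Finset.card_insert_of_notMem (fun h => hp'.2 (Finset.mem_of_mem_erase h)),
          Finset.card_erase_of_mem hq'.1, hKc]
        omega
      have hK'd : (K' \ A₀).card = j := by
        have hdiffeq : K' \ A₀ = (K \ A₀).erase q := by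
          ext z
          simp only [hK', Finset.mem_sdiff, Finset.mem_insert, Finset.mem_erase]
          constructor
          · rintro ⟨h1 | h1, h2⟩
            · exact absurd (h1 ▸ hp'.1) h2
            · exact ⟨h1.1, h1.2, h2⟩
          · rintro ⟨hzq, hzK, hzA⟩
            exact ⟨Or.inr ⟨hzq, hzK⟩, hzA⟩
        rw [hdiffeq, Finset.card_erase_of_mem hqd]
        omega
      obtain ⟨hK'G, hSK'G⟩ := ih K' hK'S hK'c hK'd
      have hdisjK' : Disjoint K' (S \ K') := Finset.disjoint_sdiff
      have hpK' : p ∈ K' := Finset.mem_insert_self _ _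
      have hqK' : q ∉ K' := by
        rw [hK', Finset.mem_insert]
        rintro (h | h)
        · exact hpq h.symm
        · exact (Finset.mem_erase.1 h).1 rfl
      have hqSK' : q ∈ S \ K' := Finset.mem_sdiff.2 ⟨hKS hq'.1, hqK'⟩
      have hCK : insert q (K'.erase p) = K := by
        rw [hK', Finset.erase_insert (fun h => hp'.2 (Finset.mem_of_mem_erase h)),
          Finset.insert_erase hq'.1]
      have hKG : K ∈ G := by
        have h0 := (hswap K' (S \ K') hK'G hSK'G hdisjK' p hpK' q hqSK').1
        rwa [hCK] at h0
      have hD1 : insert p ((S \ K').erase q) ∈ G :=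
        hcompl K' (S \ K') hK'G hSK'G hdisjK' p hpK' q hqSK'
      have hSK : insert p ((S \ K').erase q) = S \ K := by
        ext z
        constructor
        · intro hz
          rcases Finset.mem_insert.1 hz with rfl | hz2
          · exact Finset.mem_sdiff.2 ⟨by rw [hSdef]; exact Finset.mem_union_left _ hp'.1, hp'.2⟩
          · obtain ⟨hzq, hz3⟩ := Finset.mem_erase.1 hz2
            obtain ⟨hzS, hzK'⟩ := Finset.mem_sdiff.1 hz3
            refine Finset.mem_sdiff.2 ⟨hzS, fun hzK => hzK' ?_⟩
            rw [hK']
            exact Finset.mem_insert_of_mem (Finset.mem_erase.2 ⟨hzq, hzK⟩)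
        · intro hz
          obtain ⟨hzS, hzK⟩ := Finset.mem_sdiff.1 hz
          rcases eq_or_ne z p with rfl | hzp
          · exact Finset.mem_insert_self _ _
          · refine Finset.mem_insert_of_mem (Finset.mem_erase.2
              ⟨?_, Finset.mem_sdiff.2 ⟨hzS, ?_⟩⟩)
            · rintro rfl
              exact hzK hq'.1
            · rw [hK']
              intro hzK'
              rcases Finset.mem_insert.1 hzK' with rfl | h2
              · exact hzp rfl
              · exact hzK (Finset.mem_of_mem_erase h2)
      refine ⟨hKG, by rw [← hSK]; exact hD1⟩
  have hsubG : S.powersetCard k ⊆ G := by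
    intro K hK
    rw [Finset.mem_powersetCard] at hK
    exact (hclosure (K \ A₀).card K hK.1 hK.2 rfl).1
  have hGcard : G.card = Nat.choose (2 * k) k := by
    have h1 : ∑ A ∈ G, m A = G.card * s := by
      rw [Finset.sum_congr rfl hms, Finset.sum_const, smul_eq_mul]
    rw [h1] at hmsum
    have : G.card * s = Nat.choose (2 * k) k * s := by rw [hmsum]; ring
    exact Nat.eq_of_mul_eq_mul_right (by omega) this
  have hGeq : S.powersetCard k = G := by
    apply Finset.eq_of_subset_of_card_le hsubG
    rw [Finset.card_powersetCard, hScard, hGcard]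
  refine ⟨S, hScard, ?_⟩
  ext A
  rw [Multiset.count_nsmul]
  by_cases hA : A ∈ G
  · have h1 : Multiset.count A F = s := by
      have := hms A hA
      rwa [hmval] at this
    have h2 : A ∈ S.powersetCard k := hGeq ▸ hA
    have h3 : (S.powersetCard k).val.count A = 1 :=
      Multiset.count_eq_one_of_mem (S.powersetCard k).nodup h2
    rw [h1, h3, mul_one]
  · have h1 : Multiset.count A F = 0 := Multiset.count_eq_zero.2 (fun h => hA (hmemG.2 h))
    have h2 : A ∉ S.powersetCard k := fun h => hA (hGeq ▸ h)
    have h3 : (S.powersetCard k).val.count A = 0 := Multiset.count_eq_zero.2 h2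
    rw [h1, h3, mul_zero]

/-- If a `k`-uniform `[1,s]`-almost intersecting multihypergraph has
exactly `s * (2k choose k)` edges, then it consists of all `k`-subsets of some `2k`-set,
each with multiplicity `s`. -/
theorem stmt_1 {α : Type*} [DecidableEq α] (k s : ℕ) (hk : 1 ≤ k) (hs : 1 ≤ s)
    (F : Multiset (Finset α))
    (huniform : ∀ A ∈ F, A.card = k)
    (hai : ∀ A ∈ F,
      1 ≤ Multiset.card (F.filter fun B => Disjoint A B) ∧
      Multiset.card (F.filter fun B => Disjoint A B) ≤ s)
    (hcard : Multiset.card F = s * Nat.choose (2 * k) k) :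
    ∃ S : Finset α, S.card = 2 * k ∧ F = s • (Finset.powersetCard k S).val := by
  classical
  set X : Finset α := F.toFinset.sup id with hX
  have hsubX : ∀ A ∈ F, A ⊆ X := by
    intro A hA
    rw [hX]
    exact Finset.le_sup (f := id) (Multiset.mem_toFinset.2 hA)
  set emb : {x // x ∈ X} ↪ α := Function.Embedding.subtype _ with hemb
  set tr : Finset α → Finset {x // x ∈ X} := fun A => A.subtype (· ∈ X) with htr
  set F' : Multiset (Finset {x // x ∈ X}) := F.map tr with hF'
  have htr_back : ∀ A ∈ F, (tr A).map emb = A := by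
    intro A hA
    rw [htr, hemb, Finset.subtype_map]
    exact Finset.filter_true_of_mem (fun x hx => hsubX A hA hx)
  have htr_card : ∀ A ∈ F, (tr A).card = A.card := by
    intro A hA
    calc (tr A).card = ((tr A).map emb).card := (Finset.card_map _).symm
      _ = A.card := by rw [htr_back A hA]
  have htr_disj : ∀ A ∈ F, ∀ B ∈ F, (Disjoint (tr A) (tr B) ↔ Disjoint A B) := by
    intro A hA B hB
    constructor
    · intro h
      rw [Finset.disjoint_left]
      intro a haA haB
      have hax : a ∈ X := hsubX A hA haA
      have h1 : (⟨a, hax⟩ : {x // x ∈ X}) ∈ tr A := Finset.mem_subtype.2 haA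
      have h2 : (⟨a, hax⟩ : {x // x ∈ X}) ∈ tr B := Finset.mem_subtype.2 haB
      exact (Finset.disjoint_left.1 h) h1 h2
    · intro h
      rw [Finset.disjoint_left]
      intro a haA haB
      rw [htr, Finset.mem_subtype] at haA haB
      exact (Finset.disjoint_left.1 h) haA haB
  have huniform' : ∀ A' ∈ F', A'.card = k := by
    intro A' hA'
    rw [hF', Multiset.mem_map] at hA'
    obtain ⟨A, hA, rfl⟩ := hA'
    rw [htr_card A hA]
    exact huniform A hA
  have hfilter' : ∀ A ∈ F, F'.filter (fun B' => Disjoint (tr A) B')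
      = (F.filter (fun B => Disjoint A B)).map tr := by
    intro A hA
    rw [hF', Multiset.filter_map]
    congr 1
    apply Multiset.filter_congr
    intro B hB
    exact htr_disj A hA B hB
  have hai' : ∀ A' ∈ F',
      1 ≤ Multiset.card (F'.filter fun B => Disjoint A' B) ∧
      Multiset.card (F'.filter fun B => Disjoint A' B) ≤ s := by
    intro A' hA'
    rw [hF', Multiset.mem_map] at hA'
    obtain ⟨A, hA, rfl⟩ := hA'
    rw [hfilter' A hA, Multiset.card_map]
    exact hai A hA
  have hcard' : Multiset.card F' = s * Nat.choose (2 * k) k := by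
    rw [hF', Multiset.card_map]
    exact hcard
  obtain ⟨S', hS'card, hS'⟩ := main_fintype k s hk hs F' huniform' hai' hcard'
  refine ⟨S'.map emb, by rw [Finset.card_map]; exact hS'card, ?_⟩
  have hmapF : F'.map (fun A' => A'.map emb) = F := by
    rw [hF', Multiset.map_map]
    calc F.map ((fun A' => A'.map emb) ∘ tr) = F.map id :=
          Multiset.map_congr rfl (fun A hA => htr_back A hA)
      _ = F := Multiset.map_id F
  rw [← hmapF, hS', Multiset.map_nsmul]
  congr 1
  rw [Finset.powersetCard_map, Finset.map_val]
  apply Multiset.map_congr rfl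
  intro A' _
  exact (Finset.mapEmbedding_apply).symm
end

section
/- Let k > 2 and let s > k^k. Then no k-uniform [0,s]-almost intersecting hypergraph with at least (s+1)·(2k-2 choose k-1) edges contains k pairwise disjoint edges. -/
/-!
Fix `k` pairwise disjoint edges `G`. An edge disjoint from some member of `G` is one of the at
most `s` edges disjoint from that member, so there are at most `k * s` of them. Every other edge
meets all `k` members of `G` while having only `k` elements, so it meets each of them in exactly
one point and is the union of these points: it is a transversal of `G`, and there are at most
`k ^ k` transversals. Hence `|F| ≤ k * s + k ^ k < (k + 1) * (s + 1)`, whereas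
`(2k-2 choose k-1) ≥ k + 1` once `k ≥ 3`.
-/

open Finset

section Transversal

variable {α : Type*} [DecidableEq α] {G : Finset (Finset α)}

theorem forall_card_inter_eq_one_and_biUnion_inter_eq
    (hG : (G : Set (Finset α)).PairwiseDisjoint id) {B : Finset α} (hB : #B ≤ #G)
    (hmeet : ∀ A ∈ G, (A ∩ B).Nonempty) :
    (∀ A ∈ G, #(A ∩ B) = 1) ∧ G.biUnion (· ∩ B) = B := by
  have hsub : G.biUnion (· ∩ B) ⊆ B := biUnion_subset.2 fun _ _ => inter_subset_right
  have hcard : #(G.biUnion (· ∩ B)) = ∑ A ∈ G, #(A ∩ B) :=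
    card_biUnion fun X hX Y hY hXY =>
      (hG hX hY hXY).mono inter_subset_left inter_subset_left
  have hsum : ∑ _A ∈ G, 1 = ∑ A ∈ G, #(A ∩ B) := by
    refine le_antisymm (sum_le_sum fun A hA => (hmeet A hA).card_pos) ?_
    rw [← hcard, sum_const, smul_eq_mul, mul_one]
    exact (card_le_card hsub).trans hB
  have hone : ∀ A ∈ G, #(A ∩ B) = 1 := fun A hA =>
    ((sum_eq_sum_iff_of_le fun A hA => (hmeet A hA).card_pos).1 hsum A hA).symm
  refine ⟨hone, eq_of_subset_of_card_le hsub ?_⟩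
  rw [hcard, sum_congr rfl hone, sum_const, smul_eq_mul, mul_one]
  exact hB

theorem card_le_prod_card_of_forall_nonempty_inter
    (hG : (G : Set (Finset α)).PairwiseDisjoint id) {H : Finset (Finset α)}
    (hH : ∀ B ∈ H, #B ≤ #G) (hmeet : ∀ B ∈ H, ∀ A ∈ G, (A ∩ B).Nonempty) :
    #H ≤ ∏ A ∈ G, #A := by
  have htrans := fun B hB =>
    forall_card_inter_eq_one_and_biUnion_inter_eq hG (hH B hB) (hmeet B hB)
  calc #H ≤ #(G.pi fun A => A.powersetCard 1) := by
        refine card_le_card_of_injOn (fun B A _ => A ∩ B) (fun B hB => ?_) ?_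
        · exact mem_pi.2 fun A hA =>
            mem_powersetCard.2 ⟨inter_subset_left, (htrans B hB).1 A hA⟩
        · intro B hB B' hB' hBB'
          rw [← (htrans B hB).2, ← (htrans B' hB').2]
          exact biUnion_congr rfl fun A hA => congr_fun (congr_fun hBB' A) hA
    _ = ∏ A ∈ G, #A := by simp only [card_pi, card_powersetCard, Nat.choose_one_right]

end Transversal

theorem card_filter_exists_disjoint_le {α : Type*} [DecidableEq α] {F G : Finset (Finset α)}
    {s : ℕ} (hF : ∀ A ∈ G, #(F.filter fun B => Disjoint A B) ≤ s) :
    #(F.filter fun B => ∃ A ∈ G, Disjoint A B) ≤ #G * s := by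
  calc #(F.filter fun B => ∃ A ∈ G, Disjoint A B)
      = #(G.biUnion fun A => F.filter fun B => Disjoint A B) := by
        congr 1; ext B; simp only [mem_filter, mem_biUnion]; tauto
    _ ≤ ∑ A ∈ G, #(F.filter fun B => Disjoint A B) := card_biUnion_le
    _ ≤ #G * s := by simpa using sum_le_card_nsmul G _ s hF

theorem lt_choose_two_mul_sub_two {k : ℕ} (hk : 2 < k) : k < (2 * k - 2).choose (k - 1) := by
  have h := Nat.choose_le_middle 1 (2 * k - 2)
  rw [Nat.choose_one_right, show (2 * k - 2) / 2 = k - 1 by omega] at h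
  omega

/-- Let `k > 2` and `s > k^k`. Then no `k`-uniform `[0,s]`-almost
intersecting hypergraph with at least `(s+1) * (2k-2 choose k-1)` edges contains `k`
pairwise disjoint edges. -/
theorem stmt_6 {α : Type*} [DecidableEq α] (k s : ℕ) (hk : 2 < k) (hs : k ^ k < s)
    (F : Finset (Finset α))
    (huniform : ∀ A ∈ F, A.card = k)
    (hai : ∀ A ∈ F, (F.filter fun B => Disjoint A B).card ≤ s)
    (hcard : (s + 1) * Nat.choose (2 * k - 2) (k - 1) ≤ F.card) :
    ¬ ∃ G : Finset (Finset α), G ⊆ F ∧ G.card = k ∧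
      ∀ X ∈ G, ∀ Y ∈ G, X ≠ Y → Disjoint X Y := by
  rintro ⟨G, hGF, hGcard, hGdisj⟩
  have hhit : #(F.filter fun B => ∃ A ∈ G, Disjoint A B) ≤ k * s :=
    hGcard ▸ card_filter_exists_disjoint_le fun A hA => hai A (hGF hA)
  have htrans : #(F.filter fun B => ¬ ∃ A ∈ G, Disjoint A B) ≤ k ^ k := by
    refine (card_le_prod_card_of_forall_nonempty_inter hGdisj (fun B hB => ?_) ?_).trans_eq ?_
    · rw [huniform B (mem_filter.1 hB).1, hGcard]
    · exact fun B hB A hA =>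
        not_disjoint_iff_nonempty_inter.1 fun h => (mem_filter.1 hB).2 ⟨A, hA, h⟩
    · rw [prod_congr rfl fun A hA => huniform A (hGF hA), prod_const, hGcard]
  have hsplit := card_filter_add_card_filter_not (s := F) fun B => ∃ A ∈ G, Disjoint A B
  have hchoose := lt_choose_two_mul_sub_two hk
  nlinarith
end

section
/- For every integer s > 13, if a [1,s]-almost intersecting graph F has exactly 2s+2 edges, then F is a copy of the complete bipartite graph K_{2,s+1}: there exist two distinct vertices u, v and a set W of s+1 vertices with W ∩ {u,v} = ∅ such that the edge set of F is exactly { {u,w} : w ∈ W } ∪ { {v,w} : w ∈ W }. -/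
/-!
An edge `xy` meets at least `s + 2` of the `2s + 2` edges (itself included), so
`deg x + deg y ≥ s + 3`. If no two vertices cover all edges, let `u` have maximum degree `a`:
then `2a ≥ s + 3`, every vertex has degree at least `s + 3 - a`, and for an edge `xy` avoiding
`u`, edges avoiding `{u, x}` and `{u, y}` give `2a ≤ s + 7`. Summing degrees over the `n > a`
vertices gives `n (s + 3 - a) ≤ 4s + 4`, which is impossible once `s ≥ 14`.

So two vertices `u, v` cover all edges; `uv` is not an edge, since it would meet every edge. An
edge `uw` is disjoint exactly from the edges `vz` with `z ≠ w`, which forces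
`deg u = deg v = s + 1` and then equal neighbourhoods of `u` and `v`.
-/

namespace EdgeFamily

open Finset

variable {α : Type*} [DecidableEq α] {F : Finset (Finset α)} {A B : Finset α} {u v w x y : α}

def vertices (F : Finset (Finset α)) : Finset α := F.biUnion id

def edgesAt (F : Finset (Finset α)) (x : α) : Finset (Finset α) := {A ∈ F | x ∈ A}

def neighbors (F : Finset (Finset α)) (x : α) : Finset α := {w ∈ vertices F | {x, w} ∈ F}

def IsAlmostIntersecting (a b : ℕ) (F : Finset (Finset α)) : Prop :=
  ∀ A ∈ F, a ≤ #{B ∈ F | Disjoint A B} ∧ #{B ∈ F | Disjoint A B} ≤ b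

theorem eq_pair_of_mem (hA : #A = 2) (hx : x ∈ A) (hy : y ∈ A) (hxy : x ≠ y) : A = {x, y} :=
  (eq_of_subset_of_card_le (insert_subset_iff.2 ⟨hx, singleton_subset_iff.2 hy⟩)
    (by rw [hA, card_pair hxy])).symm

theorem exists_eq_pair_of_mem (hA : #A = 2) (hx : x ∈ A) : ∃ y, A = {x, y} := by
  obtain ⟨a, b, hab, rfl⟩ := card_eq_two.1 hA
  rcases mem_insert.1 hx with rfl | hx
  · exact ⟨b, rfl⟩
  · rw [mem_singleton.1 hx]; exact ⟨a, pair_comm _ _⟩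

theorem mem_vertices : x ∈ vertices F ↔ ∃ A ∈ F, x ∈ A := by
  simp [vertices]

theorem mem_edgesAt : A ∈ edgesAt F x ↔ A ∈ F ∧ x ∈ A := mem_filter

theorem mem_neighbors : w ∈ neighbors F x ↔ {x, w} ∈ F := by
  simp only [neighbors, mem_filter, and_iff_right_iff_imp]
  exact fun h => mem_vertices.2 ⟨_, h, by simp⟩

theorem sum_card_edgesAt {k : ℕ} (huni : ∀ A ∈ F, #A = k) :
    ∑ x ∈ vertices F, #(edgesAt F x) = k * #F := by
  calc ∑ x ∈ vertices F, #(edgesAt F x)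
      = ∑ A ∈ F, #{x ∈ vertices F | x ∈ A} :=
        sum_card_bipartiteAbove_eq_sum_card_bipartiteBelow (fun x A => x ∈ A)
    _ = ∑ A ∈ F, k := sum_congr rfl fun A hA => by
        rw [filter_mem_eq_inter, inter_eq_right.2 fun x hx => mem_vertices.2 ⟨A, hA, hx⟩,
          huni A hA]
    _ = k * #F := by rw [sum_const, smul_eq_mul, mul_comm]

theorem self_notMem_neighbors (huni : ∀ A ∈ F, #A = 2) : x ∉ neighbors F x := by
  rw [mem_neighbors]
  intro h
  simpa using huni _ h

theorem edgesAt_eq_image_neighbors (huni : ∀ A ∈ F, #A = 2) :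
    edgesAt F x = (neighbors F x).image fun w => {x, w} := by
  ext A
  simp only [mem_edgesAt, mem_image, mem_neighbors]
  constructor
  · rintro ⟨hA, hx⟩
    obtain ⟨w, rfl⟩ := exists_eq_pair_of_mem (huni A hA) hx
    exact ⟨w, hA, rfl⟩
  · rintro ⟨w, hw, rfl⟩
    exact ⟨hw, mem_insert_self _ _⟩

theorem card_neighbors (huni : ∀ A ∈ F, #A = 2) : #(neighbors F x) = #(edgesAt F x) := by
  rw [edgesAt_eq_image_neighbors huni, card_image_of_injOn]
  intro a ha b _ hab
  have hax : a ≠ x := ne_of_mem_of_not_mem ha (self_notMem_neighbors huni)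
  have : a ∈ ({x, b} : Finset α) := by simp only at hab; rw [← hab]; simp
  exact mem_singleton.1 ((mem_insert.1 this).resolve_left hax)

theorem card_edgesAt_lt_card_vertices (huni : ∀ A ∈ F, #A = 2) (hx : x ∈ vertices F) :
    #(edgesAt F x) < #(vertices F) := by
  rw [← card_neighbors huni]
  exact card_lt_card ((ssubset_iff_of_subset (filter_subset _ _)).2
    ⟨x, hx, self_notMem_neighbors huni⟩)

theorem card_edgesAt_inter_le_one (huni : ∀ A ∈ F, #A = 2) (huv : u ≠ v) :
    #(edgesAt F u ∩ edgesAt F v) ≤ 1 := by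
  refine card_le_one.2 fun A hA B hB => ?_
  simp only [mem_inter, mem_edgesAt] at hA hB
  rw [eq_pair_of_mem (huni A hA.1.1) hA.1.2 hA.2.2 huv,
    eq_pair_of_mem (huni B hB.1.1) hB.1.2 hB.2.2 huv]

theorem card_filter_not_disjoint_edgesAt_le (huni : ∀ A ∈ F, #A = 2) (hu : u ∉ B) :
    #{A ∈ edgesAt F u | ¬Disjoint B A} ≤ #B := by
  refine (card_le_card fun A hA => ?_).trans (card_image_le (s := B) (f := fun b => {u, b}))
  simp only [mem_filter, mem_edgesAt, not_disjoint_iff] at hA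
  obtain ⟨⟨hAF, huA⟩, b, hbB, hbA⟩ := hA
  exact mem_image.2
    ⟨b, hbB, (eq_pair_of_mem (huni A hAF) huA hbA (ne_of_mem_of_not_mem hbB hu).symm).symm⟩

theorem card_succ_le_card_filter_disjoint_add_card_edgesAt (h : {x, y} ∈ F) :
    #F + 1 ≤ #{B ∈ F | Disjoint {x, y} B} + #(edgesAt F x) + #(edgesAt F y) := by
  have hsplit := card_filter_add_card_filter_not (s := F) (p := fun B => Disjoint {x, y} B)
  have hmeet : {B ∈ F | ¬Disjoint {x, y} B} ⊆ edgesAt F x ∪ edgesAt F y := by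
    intro B hB
    simp only [mem_filter, not_disjoint_iff, mem_insert, mem_singleton] at hB
    obtain ⟨hB, c, rfl | rfl, hc⟩ := hB
    · exact mem_union_left _ (mem_edgesAt.2 ⟨hB, hc⟩)
    · exact mem_union_right _ (mem_edgesAt.2 ⟨hB, hc⟩)
  have hboth : 1 ≤ #(edgesAt F x ∩ edgesAt F y) :=
    card_pos.2 ⟨_, mem_inter.2 ⟨mem_edgesAt.2 ⟨h, by simp⟩, mem_edgesAt.2 ⟨h, by simp⟩⟩⟩
  have := card_union_add_card_inter (edgesAt F x) (edgesAt F y)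
  have := card_le_card hmeet
  omega

theorem card_edgesAt_add_card_edgesAt_le (huni : ∀ A ∈ F, #A = 2) (huv : u ≠ v) (hu : u ∉ B)
    (hv : v ∉ B) :
    #(edgesAt F u) + #(edgesAt F v) ≤ #{A ∈ F | Disjoint B A} + 2 * #B + 1 := by
  have hsplit := card_filter_add_card_filter_not (s := edgesAt F u ∪ edgesAt F v) (p := fun A => Disjoint B A)
  have hdisj : #{A ∈ edgesAt F u ∪ edgesAt F v | Disjoint B A} ≤ #{A ∈ F | Disjoint B A} :=
    card_le_card (filter_subset_filter _ (union_subset (filter_subset _ _) (filter_subset _ _)))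
  have hmeet : #{A ∈ edgesAt F u ∪ edgesAt F v | ¬Disjoint B A} ≤ 2 * #B := by
    rw [filter_union, two_mul]
    exact (card_union_le _ _).trans (add_le_add (card_filter_not_disjoint_edgesAt_le huni hu)
      (card_filter_not_disjoint_edgesAt_le huni hv))
  have := card_union_add_card_inter (edgesAt F u) (edgesAt F v)
  have := card_edgesAt_inter_le_one (F := F) huni huv
  omega

theorem le_thirteen_of_degree_bounds {s a n : ℕ} (h₁ : s + 3 ≤ 2 * a) (h₂ : 2 * a ≤ s + 7)
    (h₃ : a + 1 ≤ n) (h₄ : n * (s + 3) ≤ 4 * s + 4 + n * a) : s ≤ 13 := by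
  nlinarith

variable {a b s : ℕ}

theorem IsAlmostIntersecting.exists_mem_notMem (hai : IsAlmostIntersecting 1 b F)
    (hF : F.Nonempty) (u : α) : ∃ B ∈ F, u ∉ B := by
  obtain ⟨A, hA⟩ := hF
  by_cases hu : u ∈ A
  · obtain ⟨B, hB⟩ := card_pos.1 (hai A hA).1
    rw [mem_filter] at hB
    exact ⟨B, hB.1, disjoint_left.1 hB.2 hu⟩
  · exact ⟨A, hA, hu⟩

theorem IsAlmostIntersecting.add_three_le (hai : IsAlmostIntersecting a s F)
    (hcard : #F = 2 * s + 2) (h : {x, y} ∈ F) : s + 3 ≤ #(edgesAt F x) + #(edgesAt F y) := by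
  have := card_succ_le_card_filter_disjoint_add_card_edgesAt h
  have := (hai _ h).2
  omega

theorem IsAlmostIntersecting.add_three_le_of_max (huni : ∀ A ∈ F, #A = 2)
    (hai : IsAlmostIntersecting a s F) (hcard : #F = 2 * s + 2)
    (hmax : ∀ w ∈ vertices F, #(edgesAt F w) ≤ #(edgesAt F u)) (hw : w ∈ vertices F) :
    s + 3 ≤ #(edgesAt F w) + #(edgesAt F u) := by
  obtain ⟨A, hA, hwA⟩ := mem_vertices.1 hw
  obtain ⟨z, rfl⟩ := exists_eq_pair_of_mem (huni A hA) hwA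
  have := hai.add_three_le hcard hA
  have := hmax z (mem_vertices.2 ⟨_, hA, by simp⟩)
  omega

theorem IsAlmostIntersecting.exists_ne_forall_mem_or_mem (hs : 13 < s)
    (huni : ∀ A ∈ F, #A = 2) (hai : IsAlmostIntersecting 1 s F) (hcard : #F = 2 * s + 2) :
    ∃ u v, u ≠ v ∧ ∀ A ∈ F, u ∈ A ∨ v ∈ A := by
  by_contra! hcov
  have hF : F.Nonempty := card_pos.1 (by omega)
  have hV : (vertices F).Nonempty := by
    obtain ⟨A, hA⟩ := hF
    obtain ⟨x, hx⟩ := card_pos.1 (by rw [huni A hA]; omega)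
    exact ⟨x, mem_vertices.2 ⟨A, hA, hx⟩⟩
  obtain ⟨u, hu, hmax⟩ := (vertices F).exists_max_image (fun w => #(edgesAt F w)) hV
  have hdeg : ∀ w ∈ vertices F, s + 3 ≤ #(edgesAt F w) + #(edgesAt F u) :=
    fun w hw => hai.add_three_le_of_max huni hcard hmax hw
  have hpair : ∀ v, v ≠ u → #(edgesAt F u) + #(edgesAt F v) ≤ s + 5 := fun v hvu => by
    obtain ⟨C, hC, huC, hvC⟩ := hcov u v hvu.symm
    have := card_edgesAt_add_card_edgesAt_le (F := F) huni hvu.symm huC hvC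
    have := (hai C hC).2
    rw [huni C hC] at *
    omega
  obtain ⟨B, hB, huB⟩ := hai.exists_mem_notMem hF u
  obtain ⟨x, y, -, rfl⟩ := card_eq_two.1 (huni B hB)
  have hxy := hai.add_three_le hcard hB
  have hx := hpair x (by rintro rfl; simp at huB)
  have hy := hpair y (by rintro rfl; simp at huB)
  have hsum : #(vertices F) * (s + 3) ≤ 2 * #F + #(vertices F) * #(edgesAt F u) :=
    calc #(vertices F) * (s + 3) = #(vertices F) • (s + 3) := (smul_eq_mul _ _).symm
      _ ≤ ∑ w ∈ vertices F, (#(edgesAt F w) + #(edgesAt F u)) := card_nsmul_le_sum _ _ _ hdeg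
      _ = _ := by rw [sum_add_distrib, sum_card_edgesAt huni, sum_const, smul_eq_mul]
  have hu₂ := hdeg u hu
  exact hs.not_ge (le_thirteen_of_degree_bounds (by omega) (by omega)
    (card_edgesAt_lt_card_vertices huni hu) (by omega))

theorem IsAlmostIntersecting.pair_notMem (hai : IsAlmostIntersecting 1 b F)
    (hcov : ∀ A ∈ F, u ∈ A ∨ v ∈ A) : {u, v} ∉ F := by
  intro h
  obtain ⟨C, hC⟩ := card_pos.1 (hai _ h).1
  rw [mem_filter] at hC
  rcases hcov C hC.1 with hu | hv
  · exact disjoint_left.1 hC.2 (mem_insert_self u _) hu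
  · exact disjoint_left.1 hC.2 (by simp) hv

theorem edgesAt_union_edgesAt (hcov : ∀ A ∈ F, u ∈ A ∨ v ∈ A) :
    edgesAt F u ∪ edgesAt F v = F := by
  rw [edgesAt, edgesAt, ← filter_or, filter_true_of_mem hcov]

theorem card_edgesAt_add_card_edgesAt_eq (huni : ∀ A ∈ F, #A = 2) (huv : u ≠ v)
    (hcov : ∀ A ∈ F, u ∈ A ∨ v ∈ A) (huvF : {u, v} ∉ F) :
    #(edgesAt F u) + #(edgesAt F v) = #F := by
  rw [← card_union_of_disjoint, edgesAt_union_edgesAt hcov]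
  refine disjoint_left.2 fun A hu hv => ?_
  rw [mem_edgesAt] at hu hv
  exact huvF (eq_pair_of_mem (huni A hu.1) hu.2 hv.2 huv ▸ hu.1)

theorem filter_disjoint_pair_eq_erase (huni : ∀ A ∈ F, #A = 2) (huv : u ≠ v)
    (hcov : ∀ A ∈ F, u ∈ A ∨ v ∈ A) (huvF : {u, v} ∉ F) (hw : {u, w} ∈ F) :
    {C ∈ F | Disjoint {u, w} C} = (edgesAt F v).erase {v, w} := by
  have hwv : w ≠ v := by rintro rfl; exact huvF hw
  ext C
  simp only [mem_filter, mem_erase, mem_edgesAt, disjoint_insert_left, disjoint_singleton_left]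
  constructor
  · rintro ⟨hC, huC, hwC⟩
    exact ⟨by rintro rfl; simp at hwC, hC, (hcov C hC).resolve_left huC⟩
  · rintro ⟨hne, hC, hvC⟩
    refine ⟨hC, fun huC => huvF ?_, fun hwC => hne (eq_pair_of_mem (huni C hC) hvC hwC hwv.symm)⟩
    rwa [← eq_pair_of_mem (huni C hC) huC hvC huv]

theorem IsAlmostIntersecting.card_edgesAt_pos_and_le (huni : ∀ A ∈ F, #A = 2)
    (hai : IsAlmostIntersecting 1 s F) (huv : u ≠ v) (hcov : ∀ A ∈ F, u ∈ A ∨ v ∈ A)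
    (huvF : {u, v} ∉ F) (hu : 0 < #(edgesAt F u)) :
    0 < #(edgesAt F v) ∧ #(edgesAt F v) ≤ s + 1 := by
  obtain ⟨A, hA⟩ := card_pos.1 hu
  obtain ⟨hA, huA⟩ := mem_edgesAt.1 hA
  obtain ⟨w, rfl⟩ := exists_eq_pair_of_mem (huni A hA) huA
  have h := hai _ hA
  rw [filter_disjoint_pair_eq_erase huni huv hcov huvF hA] at h
  have := card_erase_le (s := edgesAt F v) (a := {v, w})
  have := pred_card_le_card_erase (s := edgesAt F v) (a := {v, w})
  omega

theorem IsAlmostIntersecting.pair_mem_of_card_edgesAt_eq (huni : ∀ A ∈ F, #A = 2)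
    (hai : IsAlmostIntersecting a s F) (huv : u ≠ v) (hcov : ∀ A ∈ F, u ∈ A ∨ v ∈ A)
    (huvF : {u, v} ∉ F) (hw : {u, w} ∈ F) (hv : #(edgesAt F v) = s + 1) : {v, w} ∈ F := by
  by_contra h
  have := (hai _ hw).2
  rw [filter_disjoint_pair_eq_erase huni huv hcov huvF hw,
    erase_eq_of_notMem fun h' => h (mem_edgesAt.1 h').1] at this
  omega

theorem IsAlmostIntersecting.exists_eq_image_union_image (huni : ∀ A ∈ F, #A = 2)
    (hai : IsAlmostIntersecting 1 s F) (hcard : #F = 2 * s + 2) (huv : u ≠ v)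
    (hcov : ∀ A ∈ F, u ∈ A ∨ v ∈ A) :
    ∃ W : Finset α, #W = s + 1 ∧ u ∉ W ∧ v ∉ W ∧
      F = (W.image fun w => {u, w}) ∪ (W.image fun w => {v, w}) := by
  have huvF := hai.pair_notMem hcov
  have hcov' : ∀ A ∈ F, v ∈ A ∨ u ∈ A := fun A hA => (hcov A hA).symm
  have hvuF : {v, u} ∉ F := by rwa [pair_comm]
  have hsum := card_edgesAt_add_card_edgesAt_eq huni huv hcov huvF
  have hu := hai.card_edgesAt_pos_and_le huni huv hcov huvF
  have hv := hai.card_edgesAt_pos_and_le huni huv.symm hcov' hvuF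
  have hdu : #(edgesAt F u) = s + 1 := by omega
  have hdv : #(edgesAt F v) = s + 1 := by omega
  have hN : neighbors F v = neighbors F u := by
    ext w
    simp only [mem_neighbors]
    exact ⟨(hai.pair_mem_of_card_edgesAt_eq huni huv.symm hcov' hvuF · hdu),
      (hai.pair_mem_of_card_edgesAt_eq huni huv hcov huvF · hdv)⟩
  refine ⟨neighbors F u, by rw [card_neighbors huni, hdu], self_notMem_neighbors huni,
    fun h => huvF (mem_neighbors.1 h), ?_⟩
  rw [← edgesAt_eq_image_neighbors huni, ← hN, ← edgesAt_eq_image_neighbors huni,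
    edgesAt_union_edgesAt hcov]

end EdgeFamily

/-- For every `s > 13`, if a `[1,s]`-almost intersecting graph has exactly
`2s+2` edges, then it is a copy of the complete bipartite graph `K_{2,s+1}`. -/
theorem stmt_10 {α : Type*} [DecidableEq α] (s : ℕ) (hs : 13 < s)
    (F : Finset (Finset α))
    (huniform : ∀ A ∈ F, A.card = 2)
    (hai : ∀ A ∈ F, 1 ≤ (F.filter fun B => Disjoint A B).card ∧
      (F.filter fun B => Disjoint A B).card ≤ s)
    (hcard : F.card = 2 * s + 2) :
    ∃ (u v : α) (W : Finset α), u ≠ v ∧ W.card = s + 1 ∧ u ∉ W ∧ v ∉ W ∧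
      F = (W.image fun w => {u, w}) ∪ (W.image fun w => {v, w}) := by
  have hai' : EdgeFamily.IsAlmostIntersecting 1 s F := hai
  obtain ⟨u, v, huv, hcov⟩ := hai'.exists_ne_forall_mem_or_mem hs huniform hcard
  obtain ⟨W, hW⟩ := hai'.exists_eq_image_union_image huniform hcard huv hcov
  exact ⟨u, v, W, huv, hW⟩
end

section
/- For every integer s > 13, if a [0,s]-almost intersecting graph F that is not a star has exactly 2s+3 edges, then F is a copy of K_2 + E_{s+1}: there exist two distinct vertices u, v and a set W of s+1 vertices with W ∩ {u,v} = ∅ such that the edge set of F is exactly { {u,v} } ∪ { {u,w} : w ∈ W } ∪ { {v,w} : w ∈ W }. -/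
/-!
Let `u` be a vertex of maximum degree `d` and `N` the set of edges missing `u`, nonempty since
`F` is not a star. An edge `{x, y}` meets `deg x + deg y - 1` edges, so `deg x + deg y ≥ s + 4`;
and at most two edges through a vertex `w ∉ e` meet `e`, whence `d ≤ s + 2`. Each neighbour `c`
of `u` lies in at least `|N| - s` edges of `N` (the others are disjoint from `{u, c}`), while the
`d` neighbours of `u` lie in at most `2|N|` edges of `N` in total; as `|N| = 2s + 3 - d`, this
forces `d ≥ s + 1`. Then every edge `{x, y}` of `N` has `deg_N x + deg_N y ≥ s + 2`, so a vertex
`v` of maximum degree in `N` has `2 deg_N v ≥ s + 2`, and an edge of `N` avoiding `v` would be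
disjoint from `d - 2` edges through `u` and `deg_N v - 2` further edges through `v`: too many.
So `N` is a star at `v`; a neighbour `c ≠ v` of `u` then lies in at most one edge of `N`, which
gives `|N| = s + 1`, `d = s + 2`, and makes every neighbour of `u` other than `v` a neighbour
of `v`.
-/

namespace AlmostIntersecting

open Finset

variable {α : Type*} [DecidableEq α]

def degree (F : Finset (Finset α)) (x : α) : ℕ := #{B ∈ F | x ∈ B}

def neighborFinset (F : Finset (Finset α)) (u : α) : Finset α :=
  {c ∈ F.biUnion id | c ≠ u ∧ {u, c} ∈ F}

theorem mem_neighborFinset {F : Finset (Finset α)} {u c : α} :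
    c ∈ neighborFinset F u ↔ c ≠ u ∧ {u, c} ∈ F := by
  simp only [neighborFinset, mem_filter, mem_biUnion, id, and_iff_right_iff_imp]
  exact fun ⟨_, h⟩ => ⟨_, h, mem_insert_of_mem (mem_singleton_self c)⟩

theorem exists_forall_degree_le [Nonempty α] (F : Finset (Finset α)) :
    ∃ u, ∀ x, degree F x ≤ degree F u := by
  obtain ⟨a⟩ := ‹Nonempty α›
  obtain ⟨u, -, hu⟩ :=
    (insert a (F.biUnion id)).exists_max_image (degree F) (insert_nonempty _ _)
  refine ⟨u, fun x => ?_⟩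
  by_cases hx : x ∈ F.biUnion id
  · exact hu x (mem_insert_of_mem hx)
  · have : degree F x = 0 := by
      simp only [mem_biUnion, id, not_exists, not_and] at hx
      simpa [degree, filter_eq_empty_iff] using hx
    omega

theorem eq_pair_of_mem {B : Finset α} {u c : α} (hB : #B = 2) (hu : u ∈ B) (hc : c ∈ B)
    (hcu : c ≠ u) : B = {u, c} :=
  (eq_of_subset_of_card_le (insert_subset hu (singleton_subset_iff.2 hc))
    (by rw [hB, card_pair hcu.symm])).symm

theorem card_filter_notMem_le_add_degree {F : Finset (Finset α)} {s : ℕ}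
    (hai : ∀ A ∈ F, #{B ∈ F | Disjoint A B} ≤ s) {u c : α} (he : {u, c} ∈ F) :
    #{B ∈ F | u ∉ B} ≤ s + degree {B ∈ F | u ∉ B} c := by
  have hmiss : {B ∈ {B ∈ F | u ∉ B} | c ∉ B} ⊆ {B ∈ F | Disjoint {u, c} B} := by
    intro B hB
    simp only [mem_filter] at hB ⊢
    simp [hB]
  have := card_filter_add_card_filter_not (s := {B ∈ F | u ∉ B}) fun B => c ∈ B
  have := (card_le_card hmiss).trans (hai _ he)
  unfold degree
  omega

section Uniform

variable {F : Finset (Finset α)} (huni : ∀ B ∈ F, #B = 2)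
include huni

theorem filter_mem_eq_image (u : α) :
    {B ∈ F | u ∈ B} = (neighborFinset F u).image fun c => {u, c} := by
  ext B
  simp only [mem_filter, mem_image, mem_neighborFinset]
  constructor
  · rintro ⟨hB, hu⟩
    obtain ⟨c, hc, hcu⟩ := B.exists_mem_ne (by rw [huni B hB]; norm_num) u
    have hBuc := eq_pair_of_mem (huni B hB) hu hc hcu
    exact ⟨c, ⟨hcu, hBuc ▸ hB⟩, hBuc.symm⟩
  · rintro ⟨c, ⟨-, hc⟩, rfl⟩
    exact ⟨hc, mem_insert_self _ _⟩

theorem card_neighborFinset (u : α) : #(neighborFinset F u) = degree F u := by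
  rw [degree, filter_mem_eq_image huni, card_image_of_injOn]
  intro c hc c' hc' (h : ({u, c} : Finset α) = {u, c'})
  have : c ∈ ({u, c'} : Finset α) := h ▸ mem_insert_of_mem (mem_singleton_self c)
  simpa [(mem_neighborFinset.1 hc).1] using this

theorem card_filter_disjoint_pair_add_degree_add_degree {x y : α} (hxy : x ≠ y)
    (he : {x, y} ∈ F) : #{B ∈ F | Disjoint {x, y} B} + degree F x + degree F y = #F + 1 := by
  have hmeet : {B ∈ F | ¬Disjoint {x, y} B} = {B ∈ F | x ∈ B} ∪ {B ∈ F | y ∈ B} := by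
    ext B
    simp only [mem_filter, mem_union, disjoint_insert_left, disjoint_singleton_left]
    tauto
  have hboth : {B ∈ F | x ∈ B} ∩ {B ∈ F | y ∈ B} = {{x, y}} := by
    ext B
    simp only [mem_inter, mem_filter, mem_singleton]
    constructor
    · rintro ⟨⟨hB, hx⟩, -, hy⟩
      exact eq_pair_of_mem (huni B hB) hx hy hxy.symm
    · rintro rfl
      simp [he]
  have := card_union_add_card_inter {B ∈ F | x ∈ B} {B ∈ F | y ∈ B}
  have := card_filter_add_card_filter_not (s := F) fun B => Disjoint {x, y} B
  rw [hmeet, hboth, card_singleton] at *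
  unfold degree
  omega

theorem degree_le_card_filter_disjoint_add_card {e : Finset α} {w : α} (hw : w ∉ e) :
    degree F w ≤ #{B ∈ F | w ∈ B ∧ Disjoint e B} + #e := by
  have hmeet : {B ∈ F | w ∈ B ∧ ¬Disjoint e B} ⊆ e.image fun z => {w, z} := by
    intro B hB
    obtain ⟨hBF, hwB, hmeet⟩ := mem_filter.1 hB
    obtain ⟨z, hze, hzB⟩ := not_disjoint_iff.1 hmeet
    have hzw : z ≠ w := ne_of_mem_of_not_mem hze hw
    exact mem_image.2 ⟨z, hze, (eq_pair_of_mem (huni B hBF) hwB hzB hzw).symm⟩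
  have := card_filter_add_card_filter_not (s := {B ∈ F | w ∈ B}) fun B => Disjoint e B
  rw [filter_filter, filter_filter] at this
  have := (card_le_card hmeet).trans card_image_le
  unfold degree
  omega

theorem sum_degree_le_two_mul_card (U : Finset α) : ∑ c ∈ U, degree F c ≤ 2 * #F :=
  calc ∑ c ∈ U, degree F c = ∑ B ∈ F, #{c ∈ U | c ∈ B} :=
        sum_card_bipartiteAbove_eq_sum_card_bipartiteBelow (· ∈ ·)
    _ ≤ ∑ B ∈ F, 2 :=
        sum_le_sum fun B hB => huni B hB ▸ card_le_card fun c hc => (mem_filter.1 hc).2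
    _ = 2 * #F := by rw [sum_const, smul_eq_mul, mul_comm]

theorem degree_le_degree_filter_notMem_add_one {u x : α} (hxu : x ≠ u) :
    degree F x ≤ degree {B ∈ F | u ∉ B} x + 1 := by
  have hboth : {B ∈ {B ∈ F | x ∈ B} | u ∈ B} ⊆ {{u, x}} := fun B hB => by
    simp only [mem_filter] at hB
    exact mem_singleton.2 (eq_pair_of_mem (huni B hB.1.1) hB.2 hB.1.2 hxu)
  have := card_filter_add_card_filter_not (s := {B ∈ F | x ∈ B}) fun B => u ∈ B
  have := (card_le_card hboth).trans_eq (card_singleton _)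
  rw [degree, degree, filter_comm]
  omega

theorem filter_mem_subset_of_forall_mem {v c : α} (hstar : ∀ B ∈ F, v ∈ B) (hcv : c ≠ v) :
    {B ∈ F | c ∈ B} ⊆ {{v, c}} := fun B hB => by
  obtain ⟨hBF, hcB⟩ := mem_filter.1 hB
  exact mem_singleton.2 (eq_pair_of_mem (huni B hBF) (hstar B hBF) hcB hcv)

theorem pair_mem_of_forall_mem {v c : α} (hstar : ∀ B ∈ F, v ∈ B) (hcv : c ≠ v)
    (hc : 0 < degree F c) : {v, c} ∈ F := by
  obtain ⟨B, hB⟩ := card_pos.1 hc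
  obtain rfl := mem_singleton.1 (filter_mem_subset_of_forall_mem huni hstar hcv hB)
  exact (mem_filter.1 hB).1

theorem eq_insert_neighborFinset_of_forall_mem {s : ℕ} (hs : 0 < s) {v : α}
    (hstar : ∀ B ∈ F, v ∈ B) {U : Finset α} (hU : ∀ c ∈ U, #F ≤ s + degree F c)
    (hcard : #U + #F = 2 * s + 3) (hlow : s + 1 ≤ #U) (hup : #U ≤ s + 2) :
    U = insert v (neighborFinset F v) ∧ #(neighborFinset F v) = s + 1 := by
  have hW : #(neighborFinset F v) = #F := by
    rw [card_neighborFinset huni, degree, filter_true_of_mem hstar]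
  have hsub : U ⊆ insert v (neighborFinset F v) := fun c hc => by
    rcases eq_or_ne c v with rfl | hcv
    · exact mem_insert_self _ _
    · have := hU c hc
      exact mem_insert_of_mem (mem_neighborFinset.2
        ⟨hcv, pair_mem_of_forall_mem huni hstar hcv (by omega)⟩)
  obtain ⟨c, hc, hcv⟩ := U.exists_mem_ne (by omega) v
  have := (card_le_card (filter_mem_subset_of_forall_mem huni hstar hcv)).trans_eq
    (card_singleton _)
  have := hU c hc
  have := card_le_card hsub
  have := card_insert_le v (neighborFinset F v)
  unfold degree at *
  exact ⟨eq_of_subset_of_card_le hsub (by omega), by omega⟩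

variable {s : ℕ} (hai : ∀ A ∈ F, #{B ∈ F | Disjoint A B} ≤ s)
include hai

theorem card_add_one_le_add_degree_add_degree {x y : α} (hxy : x ≠ y) (he : {x, y} ∈ F) :
    #F + 1 ≤ s + degree F x + degree F y := by
  have := card_filter_disjoint_pair_add_degree_add_degree huni hxy he
  have := hai _ he
  omega

theorem degree_le_add_two_of_notMem {e : Finset α} (he : e ∈ F) {w : α} (hw : w ∉ e) :
    degree F w ≤ s + 2 := by
  have := degree_le_card_filter_disjoint_add_card huni hw
  have : #{B ∈ F | w ∈ B ∧ Disjoint e B} ≤ #{B ∈ F | Disjoint e B} :=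
    card_le_card (monotone_filter_right F fun _ _ h => h.2)
  have := hai e he
  rw [huni e he] at *
  omega

theorem degree_add_degree_filter_notMem_le {e : Finset α} (he : e ∈ F) {u v : α} (hu : u ∉ e)
    (hv : v ∉ e) : degree F u + degree {B ∈ F | u ∉ B} v ≤ s + 4 := by
  set N := {B ∈ F | u ∉ B}
  have hu_deg := degree_le_card_filter_disjoint_add_card huni hu
  have hv_deg := degree_le_card_filter_disjoint_add_card
    (fun B hB => huni B (mem_filter.1 hB).1) (F := N) hv
  set Eu := {B ∈ F | u ∈ B ∧ Disjoint e B}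
  set Ev := {B ∈ N | v ∈ B ∧ Disjoint e B}
  have hdisj : Disjoint Eu Ev :=
    disjoint_left.2 fun B hB hB' => (mem_filter.1 (mem_filter.1 hB').1).2 (mem_filter.1 hB).2.1
  have hsub : Eu ∪ Ev ⊆ {B ∈ F | Disjoint e B} := union_subset
    (monotone_filter_right F fun _ _ h => h.2)
    fun B hB => mem_filter.2 ⟨(mem_filter.1 (mem_filter.1 hB).1).1, (mem_filter.1 hB).2.2⟩
  have := (card_le_card hsub).trans (hai e he)
  rw [card_union_of_disjoint hdisj] at this
  rw [huni e he] at hu_deg hv_deg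
  omega

variable (hcard : #F = 2 * s + 3)
include hcard

theorem add_one_le_degree_of_forall_degree_le (hs : 6 < s) {u : α}
    (hmax : ∀ x, degree F x ≤ degree F u) {e : Finset α} (he : e ∈ F) (hue : u ∉ e) :
    s + 1 ≤ degree F u := by
  set d := degree F u
  set N := {B ∈ F | u ∉ B}
  have hN : d + #N = 2 * s + 3 := hcard ▸ card_filter_add_card_filter_not _
  have hlow : s + 4 ≤ 2 * d := by
    obtain ⟨x, y, hxy, rfl⟩ := card_eq_two.1 (huni e he)
    have := card_add_one_le_add_degree_add_degree huni hai hxy he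
    have := hmax x
    have := hmax y
    omega
  have hup := degree_le_add_two_of_notMem huni hai he hue
  have hcount : d * #N ≤ d * s + 2 * #N :=
    calc d * #N = ∑ _c ∈ neighborFinset F u, #N := by
          rw [sum_const, card_neighborFinset huni, smul_eq_mul]
      _ ≤ ∑ c ∈ neighborFinset F u, (s + degree N c) :=
          sum_le_sum fun c hc => card_filter_notMem_le_add_degree hai (mem_neighborFinset.1 hc).2
      _ = d * s + ∑ c ∈ neighborFinset F u, degree N c := by
          rw [sum_add_distrib, sum_const, card_neighborFinset huni, smul_eq_mul]
      _ ≤ d * s + 2 * #N := Nat.add_le_add_left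
          (sum_degree_le_two_mul_card (fun B hB => huni B (mem_filter.1 hB).1) _) _
  nlinarith

theorem forall_mem_of_forall_degree_le (hs : 4 < s) {u : α} (hu : s + 1 ≤ degree F u) {v : α}
    (hvmax : ∀ x, degree {B ∈ F | u ∉ B} x ≤ degree {B ∈ F | u ∉ B} v) :
    ∀ B ∈ {B ∈ F | u ∉ B}, v ∈ B := by
  intro B hB
  by_contra hvB
  obtain ⟨hBF, huB⟩ := mem_filter.1 hB
  obtain ⟨x, y, hxy, rfl⟩ := card_eq_two.1 (huni _ hBF)
  have := card_add_one_le_add_degree_add_degree huni hai hxy hBF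
  have hxu : x ≠ u := by rintro rfl; simp at huB
  have hyu : y ≠ u := by rintro rfl; simp at huB
  have := degree_le_degree_filter_notMem_add_one huni hxu
  have := degree_le_degree_filter_notMem_add_one huni hyu
  have := hvmax x
  have := hvmax y
  have := degree_add_degree_filter_notMem_le huni hai hBF huB hvB
  omega

end Uniform

end AlmostIntersecting

open Finset AlmostIntersecting in
/-- For every `s > 13`, if a `[0,s]`-almost intersecting graph that is not
a star has exactly `2s+3` edges, then it is a copy of `K_2 + E_{s+1}`. -/
theorem stmt_13 {α : Type*} [DecidableEq α] (s : ℕ) (hs : 13 < s)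
    (F : Finset (Finset α))
    (huniform : ∀ A ∈ F, A.card = 2)
    (hai : ∀ A ∈ F, (F.filter fun B => Disjoint A B).card ≤ s)
    (hstar : ¬ ∃ v : α, ∀ e ∈ F, v ∈ e)
    (hcard : F.card = 2 * s + 3) :
    ∃ (u v : α) (W : Finset α), u ≠ v ∧ W.card = s + 1 ∧ u ∉ W ∧ v ∉ W ∧
      F = insert {u, v} ((W.image fun w => {u, w}) ∪ (W.image fun w => {v, w})) := by
  obtain ⟨A, hA⟩ := card_pos.1 (by omega : 0 < #F)
  obtain ⟨a, -⟩ := card_pos.1 (by rw [huniform A hA]; omega)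
  have : Nonempty α := ⟨a⟩
  obtain ⟨u, humax⟩ := exists_forall_degree_le F
  obtain ⟨e, he, hue⟩ : ∃ e ∈ F, u ∉ e := by
    simpa using not_exists.1 hstar u
  set N := {B ∈ F | u ∉ B}
  have hNuni : ∀ B ∈ N, #B = 2 := fun B hB => huniform B (mem_filter.1 hB).1
  have hu_low := add_one_le_degree_of_forall_degree_le huniform hai hcard (by omega) humax he hue
  obtain ⟨v, hvmax⟩ := exists_forall_degree_le N
  have hNstar := forall_mem_of_forall_degree_le huniform hai hcard (by omega) hu_low hvmax
  obtain ⟨hU, hW⟩ := eq_insert_neighborFinset_of_forall_mem hNuni (by omega) hNstar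
    (fun c hc => card_filter_notMem_le_add_degree hai (mem_neighborFinset.1 hc).2)
    (by rw [card_neighborFinset huniform]; exact hcard ▸ card_filter_add_card_filter_not _)
    (by rwa [card_neighborFinset huniform])
    (by rw [card_neighborFinset huniform]; exact degree_le_add_two_of_notMem huniform hai he hue)
  have hvu := (mem_neighborFinset.1 (hU ▸ mem_insert_self v _ : v ∈ neighborFinset F u)).1
  refine ⟨u, v, neighborFinset N v, hvu.symm, hW, fun hu => ?_, fun hv => ?_, ?_⟩
  · exact (mem_filter.1 (mem_neighborFinset.1 hu).2).2 (mem_insert_of_mem (mem_singleton_self u))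
  · exact (mem_neighborFinset.1 hv).1 rfl
  · calc F = {B ∈ F | u ∈ B} ∪ {B ∈ N | v ∈ B} := by
          rw [filter_true_of_mem hNstar, filter_union_filter_not_eq]
      _ = _ := by
          rw [filter_mem_eq_image huniform, filter_mem_eq_image hNuni, hU, image_insert,
            insert_union]
end
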